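/- arXiv:2211.06216 — 5 statements merged into one kernel-verified Lean document; each statement's English description precedes it below -/
import Mathlib

section
/- Let γ = (sin φ : cos φ) be a developing map with lifted monodromy h̃ of translation number τ(h̃) > 0, and let F ∈ Diff_ℤ(ℝ) be the unique diffeomorphism with φ(F(x)) = φ(x) + π for all x. Then the Poincaré translation numbers satisfy τ(h̃)·τ(F) = 1, where τ(F) = lim_{N→∞} F^N(0)/N. -/
open Real Filter Topology

/-- `h : ℝ → ℝ` is the lift to `ℝ = RP~(1)` of the projective action of a matrix
`M ∈ SL(2,ℝ)` on `RP(1) = ℝ/πℤ`. -/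
def IsMoebiusLift (h : ℝ → ℝ) (M : Matrix (Fin 2) (Fin 2) ℝ) : Prop :=
  StrictMono h ∧ Continuous h ∧ Function.Surjective h ∧
  (∀ x, h (x + π) = h x + π) ∧ M.det = 1 ∧
  ∀ x, ∃ c : ℝ, c ≠ 0 ∧
    Real.sin (h x) = c * (M 0 0 * Real.sin x + M 0 1 * Real.cos x) ∧
    Real.cos (h x) = c * (M 1 0 * Real.sin x + M 1 1 * Real.cos x)

/-- For a developing map `γ = (sin φ : cos φ)` with lifted monodromy `h̃` of positive
translation number `a = τ(h̃)`, and `F ∈ Diff_ℤ(ℝ)` the generator of the stabilizer,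
i.e. `φ(F(x)) = φ(x) + π`, the translation numbers satisfy `τ(h̃)·τ(F) = 1`, where
`τ(F) = lim F^N(0)/N`. -/
theorem translation_numbers_product_one
    (φ h F : ℝ → ℝ) (M : Matrix (Fin 2) (Fin 2) ℝ) (a b : ℝ)
    (hφ : ContDiff ℝ (⊤ : ℕ∞) φ) (hφm : StrictMono φ)
    (hM : IsMoebiusLift h M)
    (hper : ∀ x, φ (x + 1) = h (φ x))
    (hFc : Continuous F) (hFm : StrictMono F) (hFsurj : Function.Surjective F)
    (hFz : ∀ x, F (x + 1) = F x + 1)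
    (hFφ : ∀ x, φ (F x) = φ x + π)
    (ha : Tendsto (fun N : ℕ => h^[N] (φ 0) / (π * N)) atTop (𝓝 a))
    (hb : Tendsto (fun N : ℕ => F^[N] 0 / (N : ℝ)) atTop (𝓝 b))
    (hapos : 0 < a) :
    a * b = 1 := by
  have hπ := Real.pi_pos
  set x : ℕ → ℝ := fun N => F^[N] 0 with hx
  have hφx : ∀ N : ℕ, φ (x N) = φ 0 + N * π := by
    intro N; induction N with
    | zero => simp [hx]
    | succ n ih =>
      have : x (n+1) = F (x n) := Function.iterate_succ_apply' F n 0
      rw [this, hFφ, ih]; push_cast; ring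
  have hφk : ∀ k : ℕ, φ (k : ℝ) = h^[k] (φ 0) := by
    intro k; induction k with
    | zero => simp
    | succ n ih =>
      rw [Function.iterate_succ_apply', ← ih]
      have := hper (n : ℝ)
      push_cast
      rw [← this]
  have hFgt : ∀ y, y < F y := by
    intro y
    have : φ y < φ (F y) := by rw [hFφ]; linarith
    exact hφm.lt_iff_lt.mp this
  have hxnonneg : ∀ N, 0 ≤ x N := by
    intro N; induction N with
    | zero => simp [hx]
    | succ n ih =>
      have : x (n+1) = F (x n) := Function.iterate_succ_apply' F n 0
      rw [this]; exact ih.trans (hFgt (x n)).le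
  have hxtop : Tendsto x atTop atTop := by
    rw [tendsto_atTop]
    intro C
    obtain ⟨N₀, hN₀⟩ := exists_nat_gt ((φ C - φ 0) / π)
    filter_upwards [eventually_ge_atTop N₀] with N hN
    have hNN : ((φ C - φ 0) / π) < (N : ℝ) := hN₀.trans_le (by exact_mod_cast hN)
    have h1 : φ C ≤ φ (x N) := by
      rw [hφx]
      have := (div_lt_iff₀ hπ).mp hNN
      linarith
    exact hφm.le_iff_le.mp h1
  set k : ℕ → ℕ := fun N => ⌊x N⌋₊ with hkdef
  have hktop : Tendsto k atTop atTop := tendsto_nat_floor_atTop.comp hxtop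
  have hk_le : ∀ N, (k N : ℝ) ≤ x N := fun N => Nat.floor_le (hxnonneg N)
  have hk_lt : ∀ N, x N < (k N : ℝ) + 1 := fun N => Nat.lt_floor_add_one (x N)
  -- sandwich of iterates
  have hle : ∀ N, h^[k N] (φ 0) ≤ φ 0 + N * π := by
    intro N
    rw [← hφk, ← hφx]
    exact hφm.monotone (hk_le N)
  have hlt : ∀ N, φ 0 + N * π < h^[k N + 1] (φ 0) := by
    intro N
    rw [← hφk, ← hφx]
    apply hφm
    push_cast
    exact hk_lt N
  -- k N / N → b
  have hdiff0 : Tendsto (fun N : ℕ => (x N - k N) / N) atTop (𝓝 0) := by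
    have h1 : Tendsto (fun N : ℕ => (1 : ℝ) / N) atTop (𝓝 0) :=
      tendsto_one_div_atTop_nhds_zero_nat
    refine squeeze_zero (fun N => ?_) (fun N => ?_) h1
    · exact div_nonneg (by linarith [hk_le N]) (Nat.cast_nonneg N)
    · rcases Nat.eq_zero_or_pos N with rfl | hN
      · simp
      · apply div_le_div_of_nonneg_right ?_ (by positivity)
        · linarith [hk_lt N]
  have hkb : Tendsto (fun N : ℕ => (k N : ℝ) / N) atTop (𝓝 b) := by
    have := hb.sub hdiff0
    simp only [sub_zero] at this
    convert this using 2 with N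
    rw [div_sub_div_same]
    simp only [hx]
    ring_nf
  have hkb1 : Tendsto (fun N : ℕ => ((k N : ℝ) + 1) / N) atTop (𝓝 b) := by
    have h1 : Tendsto (fun N : ℕ => (1 : ℝ) / N) atTop (𝓝 0) :=
      tendsto_one_div_atTop_nhds_zero_nat
    have := hkb.add h1
    simp only [add_zero] at this
    convert this using 2 with N
    rw [add_div]
  have hrhs : Tendsto (fun N : ℕ => (φ 0 + N * π) / (π * N)) atTop (𝓝 1) := by
    have h0 : Tendsto (fun N : ℕ => (φ 0 / π) / N) atTop (𝓝 0) :=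
      tendsto_const_div_atTop_nhds_zero_nat _
    have h1 : Tendsto (fun N : ℕ => (φ 0 / π) / N + 1) atTop (𝓝 (0 + 1)) :=
      h0.add tendsto_const_nhds
    rw [zero_add] at h1
    refine h1.congr' ?_
    filter_upwards [eventually_ge_atTop 1] with N hN
    have hN0 : (N : ℝ) ≠ 0 := Nat.cast_ne_zero.mpr (by omega)
    field_simp
  have hA : Tendsto (fun N : ℕ => h^[k N] (φ 0) / (π * k N) * ((k N : ℝ) / N))
      atTop (𝓝 (a * b)) := (ha.comp hktop).mul hkb
  have hB : Tendsto (fun N : ℕ => h^[k N + 1] (φ 0) / (π * (k N + 1)) * (((k N : ℝ) + 1) / N))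
      atTop (𝓝 (a * b)) := by
    have hktop1 : Tendsto (fun N => k N + 1) atTop atTop :=
      (tendsto_add_atTop_nat 1).comp hktop
    have := (ha.comp hktop1).mul hkb1
    simp only [Function.comp_def] at this
    convert this using 2 with N
    push_cast
    ring
  have hab_le : a * b ≤ 1 := by
    refine le_of_tendsto_of_tendsto hA hrhs ?_
    filter_upwards [hktop.eventually_ge_atTop 1, eventually_ge_atTop 1] with N hk1 hN1
    have hk0 : (k N : ℝ) ≠ 0 := Nat.cast_ne_zero.mpr (by omega)
    have hN0 : (0:ℝ) < N := by exact_mod_cast Nat.pos_of_ne_zero (by omega)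
    have heq : h^[k N] (φ 0) / (π * k N) * ((k N : ℝ) / N) = h^[k N] (φ 0) / (π * N) := by
      field_simp
    rw [heq]
    exact div_le_div_of_nonneg_right (hle N) (by positivity) |>.trans_eq rfl
  have hab_ge : 1 ≤ a * b := by
    refine le_of_tendsto_of_tendsto hrhs hB ?_
    filter_upwards [eventually_ge_atTop 1] with N hN1
    have hk0 : ((k N : ℝ) + 1) ≠ 0 := by positivity
    have hN0 : (0:ℝ) < N := by exact_mod_cast Nat.pos_of_ne_zero (by omega)
    have heq : h^[k N + 1] (φ 0) / (π * ((k N : ℝ) + 1)) * (((k N : ℝ) + 1) / N)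
        = h^[k N + 1] (φ 0) / (π * N) := by
      field_simp
    rw [heq]
    exact div_le_div_of_nonneg_right (hlt N).le (by positivity)
  linarith
end

section
/- Let γ = (sin φ : cos φ) be a developing map with lifted monodromy h̃. If τ(h̃) > 0 then φ: ℝ → ℝ is surjective (hence a diffeomorphism onto ℝ). If τ(h̃) = 0 and the monodromy h ∈ PSL(2,ℝ) is hyperbolic, the image of φ is an open interval between two consecutive fixed points of the action of h̃ on ℝ; if h is parabolic, the image is an open interval between consecutive fixed points, of length π (the complement of the unique fixed point of h in RP(1)). -/
open Real Filter Topology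

/-!
Each point of `range φ` is moved up by `h`, as `φ x < φ (x + 1) = h (φ x)`. So the connected set
`range φ` contains no fixed point of `h`, while each finite endpoint of it, a limit of `φ` at
`±∞`, is fixed by `h`. Conjugated by `x ↦ π * x`, `h` becomes a continuous degree-one circle lift
with translation number `t`, and such a lift has a fixed point iff its translation number is `0`.
Hence for `t > 0` the range is unbounded on both sides, and for `t = 0` it is trapped between
fixed points and is the open interval between two consecutive ones, at most `π` apart.
A fixed point `c` makes `(sin c, cos c)` an eigenvector of `M`; when `|tr M| = 2` the only
eigenvalue is `tr M / 2`, so two fixed points less than `π` apart force `M = ±1`.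
-/

open Set

namespace CircleDeg1Lift

variable {p : ℝ} {h : ℝ → ℝ}

noncomputable def ofPeriod (hp : 0 < p) (hm : Monotone h) (hh : ∀ x, h (x + p) = h x + p) :
    CircleDeg1Lift where
  toFun x := h (p * x) / p
  monotone' _ _ hxy := div_le_div_of_nonneg_right (hm (by gcongr)) hp.le
  map_add_one' x := by simp only [mul_add, mul_one, hh]; field_simp

variable (hp : 0 < p) (hm : Monotone h) (hh : ∀ x, h (x + p) = h x + p)

theorem ofPeriod_apply (x : ℝ) : ofPeriod hp hm hh x = h (p * x) / p := rfl

theorem ofPeriod_pow_apply (n : ℕ) (x : ℝ) :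
    (ofPeriod hp hm hh ^ n) x = h^[n] (p * x) / p := by
  induction n generalizing x with
  | zero => simp [hp.ne']
  | succ n ih =>
    rw [pow_succ', mul_apply, ih, ofPeriod_apply, Function.iterate_succ_apply',
      mul_div_cancel₀ _ hp.ne']

theorem tendsto_iterate_div_translationNumber_ofPeriod (y : ℝ) :
    Tendsto (fun n : ℕ => h^[n] y / (p * n)) atTop
      (𝓝 (ofPeriod hp hm hh).translationNumber) := by
  have hlim := ((ofPeriod hp hm hh).tendsto_translationNumber (y / p)).add
    (tendsto_const_div_atTop_nhds_zero_nat (y / p))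
  rw [add_zero] at hlim
  refine hlim.congr fun n => ?_
  rw [ofPeriod_pow_apply, mul_div_cancel₀ _ hp.ne']
  ring

theorem translationNumber_ofPeriod_eq_zero_iff (hc : Continuous h) :
    (ofPeriod hp hm hh).translationNumber = 0 ↔ ∃ x, h x = x := by
  have hcont : Continuous (ofPeriod hp hm hh) := by
    simp only [funext (ofPeriod_apply hp hm hh)]
    fun_prop
  rw [← Int.cast_zero, translationNumber_eq_int_iff _ hcont]
  simp only [ofPeriod_apply, Int.cast_zero, add_zero, div_eq_iff hp.ne']
  constructor
  · rintro ⟨x, hx⟩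
    exact ⟨p * x, by rw [hx, mul_comm]⟩
  · rintro ⟨x, hx⟩
    exact ⟨x / p, by rw [mul_div_cancel₀ _ hp.ne', hx, div_mul_cancel₀ _ hp.ne']⟩

end CircleDeg1Lift

section DevelopingMap

variable {φ h : ℝ → ℝ}

theorem lt_map_of_mem_range (hφ : StrictMono φ) (hper : ∀ x, φ (x + 1) = h (φ x)) {y : ℝ}
    (hy : y ∈ range φ) : y < h y := by
  obtain ⟨x, rfl⟩ := hy
  rw [← hper]
  exact hφ (lt_add_one x)

theorem map_iSup_eq_of_bddAbove (hφ : Monotone φ) (hh : Continuous h)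
    (hper : ∀ x, φ (x + 1) = h (φ x)) (hbdd : BddAbove (range φ)) :
    h (⨆ x, φ x) = ⨆ x, φ x := by
  have hlim := tendsto_atTop_ciSup hφ hbdd
  refine tendsto_nhds_unique ((hh.tendsto _).comp hlim) ?_
  simpa only [Function.comp_def, id, hper] using
    hlim.comp (tendsto_atTop_add_const_right _ 1 tendsto_id)

theorem map_iInf_eq_of_bddBelow (hφ : Monotone φ) (hh : Continuous h)
    (hper : ∀ x, φ (x + 1) = h (φ x)) (hbdd : BddBelow (range φ)) :
    h (⨅ x, φ x) = ⨅ x, φ x := by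
  have hlim := tendsto_atBot_ciInf hφ hbdd
  refine tendsto_nhds_unique ((hh.tendsto _).comp hlim) ?_
  simpa only [Function.comp_def, id, hper] using
    hlim.comp (tendsto_atBot_add_const_right _ 1 tendsto_id)

variable (hφc : Continuous φ) (hφ : StrictMono φ) (hper : ∀ x, φ (x + 1) = h (φ x))
include hφc hφ hper

theorem range_subset_Ioi_of_map_eq_self {c : ℝ} (hc : h c = c) (hcφ : c < φ 0) :
    range φ ⊆ Ioi c := by
  rintro _ ⟨x, rfl⟩
  rw [mem_Ioi]
  by_contra! hxc
  have hmem := (isPreconnected_range hφc).Icc_subset ⟨x, rfl⟩ ⟨0, rfl⟩ ⟨hxc, hcφ.le⟩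
  exact (lt_map_of_mem_range hφ hper hmem).ne' hc

theorem range_subset_Iio_of_map_eq_self {c : ℝ} (hc : h c = c) (hφlt : φ 0 < c) :
    range φ ⊆ Iio c := by
  rintro _ ⟨x, rfl⟩
  rw [mem_Iio]
  by_contra! hxc
  have hmem := (isPreconnected_range hφc).Icc_subset ⟨0, rfl⟩ ⟨x, rfl⟩ ⟨hφlt.le, hxc⟩
  exact (lt_map_of_mem_range hφ hper hmem).ne' hc

theorem range_eq_Ioo_iInf_iSup (hh : Continuous h) (hA : BddAbove (range φ))
    (hB : BddBelow (range φ)) : range φ = Ioo (⨅ x, φ x) (⨆ x, φ x) := by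
  refine Subset.antisymm ?_ ((isConnected_range hφc).Ioo_csInf_csSup_subset hB hA)
  rintro _ ⟨x, rfl⟩
  have hmoves := lt_map_of_mem_range hφ hper (mem_range_self x)
  refine ⟨(ciInf_le hB x).lt_of_ne fun hx => ?_, (le_ciSup hA x).lt_of_ne fun hx => ?_⟩
  · exact hmoves.ne' (hx ▸ map_iInf_eq_of_bddBelow hφ.monotone hh hper hB)
  · exact hmoves.ne' (hx ▸ map_iSup_eq_of_bddAbove hφ.monotone hh hper hA)

theorem surjective_of_forall_map_ne (hh : Continuous h) (hfix : ∀ x, h x ≠ x) :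
    Function.Surjective φ := by
  have hA : ¬BddAbove (range φ) := fun hA =>
    hfix _ (map_iSup_eq_of_bddAbove hφ.monotone hh hper hA)
  have hB : ¬BddBelow (range φ) := fun hB =>
    hfix _ (map_iInf_eq_of_bddBelow hφ.monotone hh hper hB)
  intro y
  obtain ⟨_, ⟨x₁, rfl⟩, hx₁⟩ := not_bddAbove_iff.1 hA y
  obtain ⟨_, ⟨x₂, rfl⟩, hx₂⟩ := not_bddBelow_iff.1 hB y
  exact (isPreconnected_range hφc).Icc_subset ⟨x₂, rfl⟩ ⟨x₁, rfl⟩ ⟨hx₂.le, hx₁.le⟩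

theorem exists_range_eq_Ioo {p : ℝ} (hh : Continuous h) (hp : 0 < p)
    (hperiod : ∀ x, h (x + p) = h x + p) {x₀ : ℝ} (hx₀ : h x₀ = x₀) :
    ∃ a b, a < b ∧ h a = a ∧ h b = b ∧ b ≤ a + p ∧ (∀ c, a < c → c < b → h c ≠ c) ∧
      range φ = Ioo a b := by
  have hmoves {y : ℝ} (hy : y ∈ range φ) : h y ≠ y := (lt_map_of_mem_range hφ hper hy).ne'
  obtain ⟨m, hm, -⟩ := existsUnique_add_zsmul_mem_Ioc hp x₀ (φ 0 - p)
  set c := x₀ + m • p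
  rw [sub_add_cancel] at hm
  have hc : h c = c := (AddConstMapClass.map_add_zsmul (AddConstMap.mk h hperiod) x₀ m).trans
    (congrArg (· + m • p) hx₀)
  have hcφ : c < φ 0 := hm.2.lt_of_ne fun hcφ => hmoves ⟨0, hcφ.symm⟩ hc
  have hB : BddBelow (range φ) :=
    ⟨c, fun _ hy => (range_subset_Ioi_of_map_eq_self hφc hφ hper hc hcφ hy).le⟩
  have hA : BddAbove (range φ) :=
    ⟨c + p, fun _ hy => (range_subset_Iio_of_map_eq_self hφc hφ hper (by rw [hperiod, hc])
      (by linarith [hm.1]) hy).le⟩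
  have hrange := range_eq_Ioo_iInf_iSup hφc hφ hper hh hA hB
  set a := ⨅ x, φ x
  set b := ⨆ x, φ x
  have ha : h a = a := map_iInf_eq_of_bddBelow hφ.monotone hh hper hB
  have hφ0 : φ 0 ∈ Ioo a b := hrange ▸ mem_range_self 0
  refine ⟨a, b, hφ0.1.trans hφ0.2, ha, map_iSup_eq_of_bddAbove hφ.monotone hh hper hA, ?_,
    fun c hac hcb => hmoves (hrange ▸ ⟨hac, hcb⟩ : c ∈ range φ), hrange⟩
  by_contra! hlt
  exact hmoves (hrange ▸ ⟨lt_add_of_pos_right a hp, hlt⟩ : a + p ∈ range φ) (by rw [hperiod, ha])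

end DevelopingMap

section Matrix

open Matrix

variable {K : Type*} [Field K] {M : Matrix (Fin 2) (Fin 2) K} {μ : K}

theorem Matrix.sq_sub_trace_mul_add_det_eq_zero_of_mulVec_eq_smul {v : Fin 2 → K} (hv : v ≠ 0)
    (hMv : M *ᵥ v = μ • v) : μ ^ 2 - M.trace * μ + M.det = 0 := by
  have h₀ := congrFun hMv 0
  have h₁ := congrFun hMv 1
  simp only [mulVec_fin_two, Pi.smul_apply, smul_eq_mul, cons_val_zero, cons_val_one] at h₀ h₁
  rw [trace_fin_two, det_fin_two]
  obtain hv₀ | hv₁ : v 0 ≠ 0 ∨ v 1 ≠ 0 := by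
    by_contra! hv₀₁
    exact hv (funext fun i => by fin_cases i <;> simp [hv₀₁.1, hv₀₁.2])
  · refine (mul_eq_zero.1 ?_).resolve_right hv₀
    linear_combination (M 1 1 - μ) * h₀ - M 0 1 * h₁
  · refine (mul_eq_zero.1 ?_).resolve_right hv₁
    linear_combination (M 0 0 - μ) * h₁ - M 1 0 * h₀

theorem Matrix.eq_smul_one_of_mulVec_eq_smul {v w : Fin 2 → K} (hvw : v 0 * w 1 - v 1 * w 0 ≠ 0)
    (hv : M *ᵥ v = μ • v) (hw : M *ᵥ w = μ • w) : M = μ • 1 := by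
  have hv₀ := congrFun hv 0
  have hv₁ := congrFun hv 1
  have hw₀ := congrFun hw 0
  have hw₁ := congrFun hw 1
  simp only [mulVec_fin_two, Pi.smul_apply, smul_eq_mul, cons_val_zero, cons_val_one]
    at hv₀ hv₁ hw₀ hw₁
  -- Cramer's rule: each entry of `M - μ • 1`, times the determinant of `(v, w)`, vanishes.
  have h₀₀ : M 0 0 = μ := mul_right_cancel₀ hvw (by linear_combination w 1 * hv₀ - v 1 * hw₀)
  have h₀₁ : M 0 1 = 0 := mul_right_cancel₀ hvw (by linear_combination v 0 * hw₀ - w 0 * hv₀)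
  have h₁₀ : M 1 0 = 0 := mul_right_cancel₀ hvw (by linear_combination w 1 * hv₁ - v 1 * hw₁)
  have h₁₁ : M 1 1 = μ := mul_right_cancel₀ hvw (by linear_combination v 0 * hw₁ - w 0 * hv₁)
  ext i j
  fin_cases i <;> fin_cases j <;> simp [h₀₀, h₀₁, h₁₀, h₁₁]

end Matrix

namespace IsMoebiusLift

open Matrix

variable {h : ℝ → ℝ} {M : Matrix (Fin 2) (Fin 2) ℝ}

theorem exists_mulVec_eq_smul_of_map_eq_self (hM : IsMoebiusLift h M) {c : ℝ} (hc : h c = c) :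
    ∃ μ : ℝ, M *ᵥ ![sin c, cos c] = μ • ![sin c, cos c] := by
  obtain ⟨k, hk, hsin, hcos⟩ := hM.2.2.2.2.2 c
  rw [hc] at hsin hcos
  refine ⟨k⁻¹, ?_⟩
  ext i
  fin_cases i <;> simp [mulVec_fin_two] <;> field_simp <;> linarith

theorem eq_one_or_eq_neg_one_of_map_eq_self (hM : IsMoebiusLift h M) (htr : |M.trace| = 2)
    {c₁ c₂ : ℝ} (h₁ : h c₁ = c₁) (h₂ : h c₂ = c₂) (hlt : c₁ < c₂) (hlt' : c₂ < c₁ + π) :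
    M = 1 ∨ M = -1 := by
  have htr_sq : M.trace ^ 2 = 4 := by rw [← sq_abs, htr]; norm_num
  have heigen {c : ℝ} (hc : h c = c) :
      M *ᵥ ![sin c, cos c] = (M.trace / 2) • ![sin c, cos c] := by
    obtain ⟨μ, hμ⟩ := hM.exists_mulVec_eq_smul_of_map_eq_self hc
    have hv : ![sin c, cos c] ≠ 0 := fun hv => by
      have hsin : sin c = 0 := congrFun hv 0
      have hcos : cos c = 0 := congrFun hv 1
      simpa [hsin, hcos] using sin_sq_add_cos_sq c
    have hchar := sq_sub_trace_mul_add_det_eq_zero_of_mulVec_eq_smul hv hμ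
    rw [hM.2.2.2.2.1] at hchar
    have : (μ - M.trace / 2) ^ 2 = 0 := by linear_combination hchar + htr_sq / 4
    rwa [← sub_eq_zero.1 (pow_eq_zero_iff two_ne_zero |>.1 this)]
  have hindep : sin c₁ * cos c₂ - cos c₁ * sin c₂ ≠ 0 := by
    rw [← sin_sub]
    exact (sin_neg_of_neg_of_neg_pi_lt (by linarith) (by linarith)).ne
  have hscalar := eq_smul_one_of_mulVec_eq_smul hindep (heigen h₁) (heigen h₂)
  rcases (abs_eq zero_le_two).1 htr with htr | htr
  · left; rw [hscalar, htr]; norm_num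
  · right; rw [hscalar, htr]; norm_num

end IsMoebiusLift

/-- Range of a developing map `γ = (sin φ : cos φ)` with lifted monodromy `h̃`:
if `τ(h̃) > 0` then `φ` is surjective; if `τ(h̃) = 0` and the monodromy is hyperbolic
(`|tr M| > 2`), the image of `φ` is the open interval between two consecutive fixed
points of `h̃`; if it is parabolic (`|tr M| = 2`, `M ≠ ±1`), the image is an interval
of length `π` between consecutive fixed points. -/
theorem range_of_developing_map
    (φ h : ℝ → ℝ) (M : Matrix (Fin 2) (Fin 2) ℝ) (t : ℝ)
    (hφc : Continuous φ) (hφm : StrictMono φ)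
    (hM : IsMoebiusLift h M)
    (hper : ∀ x, φ (x + 1) = h (φ x))
    (ht : Tendsto (fun N : ℕ => h^[N] (φ 0) / (π * N)) atTop (𝓝 t)) :
    (0 < t → Function.Surjective φ) ∧
    (t = 0 → 2 < |Matrix.trace M| →
      ∃ a b : ℝ, a < b ∧ h a = a ∧ h b = b ∧ (∀ c, a < c → c < b → h c ≠ c) ∧
        Set.range φ = Set.Ioo a b) ∧
    (t = 0 → |Matrix.trace M| = 2 → M ≠ 1 → M ≠ -1 →
      ∃ a : ℝ, h a = a ∧ (∀ c, a < c → c < a + π → h c ≠ c) ∧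
        Set.range φ = Set.Ioo a (a + π)) := by
  obtain ⟨hhm, hhc, -, hperiod, -⟩ := id hM
  have ht_eq : t = (CircleDeg1Lift.ofPeriod pi_pos hhm.monotone hperiod).translationNumber :=
    tendsto_nhds_unique ht
      (CircleDeg1Lift.tendsto_iterate_div_translationNumber_ofPeriod _ _ _ (φ 0))
  have hfixed : t = 0 ↔ ∃ x, h x = x :=
    ht_eq ▸ CircleDeg1Lift.translationNumber_ofPeriod_eq_zero_iff _ _ _ hhc
  refine ⟨fun htpos => ?_, fun ht0 _ => ?_, fun ht0 htr hM₁ hMneg => ?_⟩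
  · exact surjective_of_forall_map_ne hφc hφm hper hhc fun x hx => htpos.ne' (hfixed.2 ⟨x, hx⟩)
  · obtain ⟨x₀, hx₀⟩ := hfixed.1 ht0
    obtain ⟨a, b, hab, ha, hb, -, hgap, hrange⟩ :=
      exists_range_eq_Ioo hφc hφm hper hhc pi_pos hperiod hx₀
    exact ⟨a, b, hab, ha, hb, hgap, hrange⟩
  · obtain ⟨x₀, hx₀⟩ := hfixed.1 ht0
    obtain ⟨a, b, hab, ha, hb, hbπ, hgap, hrange⟩ :=
      exists_range_eq_Ioo hφc hφm hper hhc pi_pos hperiod hx₀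
    obtain rfl : b = a + π := hbπ.eq_of_not_lt fun hlt =>
      (hM.eq_one_or_eq_neg_one_of_map_eq_self htr ha hb hab hlt).elim hM₁ hMneg
    exact ⟨a, ha, hgap, hrange⟩
end

section
/- Two developing maps γ₁, γ₂ with equal lifted monodromy h̃ differ by a ℤ-equivariant diffeomorphism: there exists F: ℝ → ℝ, a diffeomorphism with F(x+1) = F(x)+1, such that γ₂ = γ₁ ∘ F⁻¹. -/
/-!
Since `φᵢ (x + 1) = h (φᵢ x)`, the range of each `φᵢ` is an `h`-invariant open interval on which
`h` moves points forward. Either `h x > x` everywhere and both ranges are `ℝ`, or each range is an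
arc between two fixed points of `h`. Fixed points of `h` are zeros of `sin (h x - x)`, a
nonvanishing multiple of a trigonometric polynomial `α + β sin 2x + γ cos 2x`; unless it vanishes
identically, such a polynomial has neither three zeros nor a double zero and a second zero within a
period of length `π`. So `h` has only one forward arc modulo `π`, the two ranges differ by a shift
`n π`, and `F = φ₂⁻¹ ∘ (φ₁ + n π)` is the required conjugacy.
-/

open Real

open Set Filter Topology Function

section TrigPolynomial

theorem trig_sub_trig (α β γ x y : ℝ) :
    (α + β * sin (2 * x) + γ * cos (2 * x)) - (α + β * sin (2 * y) + γ * cos (2 * y)) =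
      2 * sin (x - y) * (β * cos (x + y) - γ * sin (x + y)) := by
  have hs := sin_sub_sin (2 * x) (2 * y)
  have hc := cos_sub_cos (2 * x) (2 * y)
  rw [show (2 * x - 2 * y) / 2 = x - y by ring, show (2 * x + 2 * y) / 2 = x + y by ring] at hs hc
  linear_combination β * hs + γ * hc

theorem hasDerivAt_trig (α β γ x : ℝ) :
    HasDerivAt (fun x => α + β * sin (2 * x) + γ * cos (2 * x))
      (2 * (β * cos (2 * x) - γ * sin (2 * x))) x := by
  have h2x : HasDerivAt (fun y : ℝ => 2 * y) 2 x := by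
    simpa using (hasDerivAt_id x).const_mul 2
  exact (((hasDerivAt_const x α).add (((hasDerivAt_sin _).comp x h2x).const_mul β)).add
    (((hasDerivAt_cos _).comp x h2x).const_mul γ)).congr_deriv (by ring)

variable {α β γ : ℝ}

theorem chord_eq_zero_of_trig_eq_zero {x y : ℝ}
    (hx : α + β * sin (2 * x) + γ * cos (2 * x) = 0)
    (hy : α + β * sin (2 * y) + γ * cos (2 * y) = 0) (hyx : y < x) (hxy : x < y + π) :
    β * cos (x + y) - γ * sin (x + y) = 0 := by
  have hsin : sin (x - y) ≠ 0 := (sin_pos_of_pos_of_lt_pi (by linarith) (by linarith)).ne'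
  have := trig_sub_trig α β γ x y
  rw [hx, hy, sub_zero, eq_comm] at this
  simpa [hsin] using this

theorem eq_zero_of_cos_sub_sin_eq_zero {u v : ℝ} (hu : β * cos u - γ * sin u = 0)
    (hv : β * cos v - γ * sin v = 0) (huv : sin (u - v) ≠ 0) : β = 0 ∧ γ = 0 := by
  rw [sin_sub] at huv
  constructor
  · have : β * (sin u * cos v - cos u * sin v) = 0 := by
      linear_combination (-sin v) * hu + sin u * hv
    simpa [huv] using this
  · have : γ * (sin u * cos v - cos u * sin v) = 0 := by
      linear_combination (-cos v) * hu + cos u * hv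
    simpa [huv] using this

theorem trig_coeffs_eq_zero_of_three_zeros {x₁ x₂ x₃ : ℝ} (h₁₂ : x₁ < x₂) (h₂₃ : x₂ < x₃)
    (h₃₁ : x₃ < x₁ + π)
    (hz₁ : α + β * sin (2 * x₁) + γ * cos (2 * x₁) = 0)
    (hz₂ : α + β * sin (2 * x₂) + γ * cos (2 * x₂) = 0)
    (hz₃ : α + β * sin (2 * x₃) + γ * cos (2 * x₃) = 0) :
    α = 0 ∧ β = 0 ∧ γ = 0 := by
  have hsin : sin ((x₃ + x₁) - (x₂ + x₁)) ≠ 0 :=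
    (sin_pos_of_pos_of_lt_pi (by linarith) (by linarith)).ne'
  obtain ⟨rfl, rfl⟩ := eq_zero_of_cos_sub_sin_eq_zero
    (chord_eq_zero_of_trig_eq_zero hz₃ hz₁ (by linarith) h₃₁)
    (chord_eq_zero_of_trig_eq_zero hz₂ hz₁ h₁₂ (by linarith)) hsin
  exact ⟨by simpa using hz₁, rfl, rfl⟩

theorem trig_coeffs_eq_zero_of_double_zero {x₁ x₂ : ℝ} (h₁₂ : x₁ < x₂) (h₂₁ : x₂ < x₁ + π)
    (hz₁ : α + β * sin (2 * x₁) + γ * cos (2 * x₁) = 0)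
    (hz₂ : α + β * sin (2 * x₂) + γ * cos (2 * x₂) = 0)
    (hd : β * cos (2 * x₂) - γ * sin (2 * x₂) = 0) :
    α = 0 ∧ β = 0 ∧ γ = 0 := by
  have hsin : sin (2 * x₂ - (x₂ + x₁)) ≠ 0 :=
    (sin_pos_of_pos_of_lt_pi (by linarith) (by linarith)).ne'
  obtain ⟨rfl, rfl⟩ := eq_zero_of_cos_sub_sin_eq_zero hd
    (chord_eq_zero_of_trig_eq_zero hz₂ hz₁ h₁₂ h₂₁) hsin
  exact ⟨by simpa using hz₁, rfl, rfl⟩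

end TrigPolynomial

theorem HasDerivAt.eq_zero_of_eventually_mul_pos {f g : ℝ → ℝ} {f' x₀ : ℝ}
    (hf : HasDerivAt f f' x₀) (hfx₀ : f x₀ = 0) (hg : ContinuousAt g x₀) (hgx₀ : g x₀ ≠ 0)
    (hpos : ∀ᶠ x in 𝓝[≠] x₀, 0 < g x * f x) : f' = 0 := by
  have hsign : ∀ᶠ x in 𝓝 x₀, 0 < g x₀ * g x :=
    (hg.const_mul (g x₀)).eventually_const_lt (mul_self_pos.2 hgx₀)
  have hmin : IsLocalMin (fun x => g x₀ * f x) x₀ := by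
    filter_upwards [hsign, eventually_nhdsWithin_iff.1 hpos] with x hgx hgf
    rcases eq_or_ne x x₀ with rfl | hx
    · rfl
    · rw [hfx₀, mul_zero]
      nlinarith [mul_pos hgx (hgf hx), sq_nonneg (g x)]
  simpa [hgx₀] using hmin.hasDerivAt_eq_zero (hf.const_mul (g x₀))

/-- The scalar `c x` of `IsMoebiusLift` is recovered continuously as
`⟪(A x, B x), (sin (h x), cos (h x))⟫ / ‖(A x, B x)‖²`, and expanding
`sin (h x - x) = c x * (A x cos x - B x sin x)` gives a trigonometric polynomial in `2 x`. -/
theorem IsMoebiusLift.exists_sin_sub_eq_mul {h : ℝ → ℝ} {M : Matrix (Fin 2) (Fin 2) ℝ}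
    (hM : IsMoebiusLift h M) :
    ∃ (α β γ : ℝ) (c : ℝ → ℝ), Continuous c ∧ ∀ x, c x ≠ 0 ∧
      sin (h x - x) = c x * (α + β * sin (2 * x) + γ * cos (2 * x)) := by
  obtain ⟨-, hhc, -, -, -, hc⟩ := hM
  set A : ℝ → ℝ := fun x => M 0 0 * sin x + M 0 1 * cos x
  set B : ℝ → ℝ := fun x => M 1 0 * sin x + M 1 1 * cos x
  have hc' : ∀ x, ∃ c : ℝ, c ≠ 0 ∧ sin (h x) = c * A x ∧ cos (h x) = c * B x := hc
  have hAB : ∀ x, 0 < A x ^ 2 + B x ^ 2 := by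
    intro x
    obtain ⟨c, -, hs, hc⟩ := hc' x
    have hone := sin_sq_add_cos_sq (h x)
    rw [hs, hc] at hone
    by_contra hle
    nlinarith [sq_nonneg (A x), sq_nonneg (B x), sq_nonneg c]
  refine ⟨(M 0 1 - M 1 0) / 2, (M 0 0 - M 1 1) / 2, (M 0 1 + M 1 0) / 2,
    fun x => (A x * sin (h x) + B x * cos (h x)) / (A x ^ 2 + B x ^ 2), ?_, fun x => ?_⟩
  · exact .div (by fun_prop) (by fun_prop) fun x => (hAB x).ne'
  · dsimp only
    obtain ⟨c, hc0, hs, hc⟩ := hc' x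
    have hcx : (A x * sin (h x) + B x * cos (h x)) / (A x ^ 2 + B x ^ 2) = c := by
      rw [hs, hc, div_eq_iff (hAB x).ne']
      ring
    refine ⟨hcx ▸ hc0, ?_⟩
    rw [hcx, sin_sub, hs, hc, sin_two_mul, cos_two_mul]
    linear_combination (-(c * M 1 0)) * sin_sq_add_cos_sq x

section Displacement

variable {h : ℝ → ℝ} {p : ℝ}

theorem periodic_apply_sub_self (hper : ∀ x, h (x + p) = h x + p) :
    Periodic (fun x => h x - x) p := fun x => by
  simp only [hper]
  ring

theorem apply_add_int_mul (hper : ∀ x, h (x + p) = h x + p) (n : ℤ) (x : ℝ) :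
    h (x + n * p) = h x + n * p := by
  linarith [(periodic_apply_sub_self hper).int_mul n x]

theorem forall_lt_apply_of_forall_Ico (hp : 0 < p) (hper : ∀ x, h (x + p) = h x + p) {s : ℝ}
    (hs : ∀ t ∈ Ico s (s + p), t < h t) (t : ℝ) : t < h t := by
  obtain ⟨y, hy, hty⟩ := (periodic_apply_sub_self hper).exists_mem_Ico hp t s
  linarith [hs y hy]

end Displacement

structure IsForwardArc (h : ℝ → ℝ) (a b : ℝ) : Prop where
  lt : a < b
  isFixedPt_left : IsFixedPt h a
  isFixedPt_right : IsFixedPt h b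
  lt_apply : ∀ x ∈ Ioo a b, x < h x

namespace IsForwardArc

variable {h : ℝ → ℝ} {a b : ℝ}

theorem le_add (hab : IsForwardArc h a b) {p : ℝ} (hp : 0 < p)
    (hper : ∀ x, h (x + p) = h x + p) : b ≤ a + p := by
  by_contra! hlt
  have := hab.lt_apply (a + p) ⟨by linarith, hlt⟩
  rw [hper, hab.isFixedPt_left.eq] at this
  exact lt_irrefl _ this

theorem right_unique {b' : ℝ} (hab : IsForwardArc h a b) (hab' : IsForwardArc h a b') :
    b = b' := by
  rcases lt_trichotomy b b' with hlt | heq | hgt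
  · exact absurd hab.isFixedPt_right.eq (hab'.lt_apply b ⟨hab.lt, hlt⟩).ne'
  · exact heq
  · exact absurd hab'.isFixedPt_right.eq (hab.lt_apply b' ⟨hab'.lt, hgt⟩).ne'

theorem add_int_mul (hab : IsForwardArc h a b) {p : ℝ} (hper : ∀ x, h (x + p) = h x + p)
    (n : ℤ) : IsForwardArc h (a + n * p) (b + n * p) where
  lt := by linarith [hab.lt]
  isFixedPt_left := by rw [IsFixedPt, apply_add_int_mul hper, hab.isFixedPt_left.eq]
  isFixedPt_right := by rw [IsFixedPt, apply_add_int_mul hper, hab.isFixedPt_right.eq]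
  lt_apply x hx := by
    have := hab.lt_apply (x - n * p) ⟨by linarith [hx.1], by linarith [hx.2]⟩
    rw [← sub_add_cancel x (n * p), apply_add_int_mul hper]
    linarith

theorem sin_sub_pos (hab : IsForwardArc h a b) (hhm : StrictMono h)
    (hπ : ∀ x, h (x + π) = h x + π) {x : ℝ} (hx : x ∈ Ioo a b) : 0 < sin (h x - x) := by
  have hxb : h x < b := hab.isFixedPt_right.eq ▸ hhm hx.2
  exact sin_pos_of_pos_of_lt_pi (by linarith [hab.lt_apply x hx])
    (by linarith [hab.le_add pi_pos hπ, hx.1])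

end IsForwardArc

namespace IsMoebiusLift

variable {h : ℝ → ℝ} {M : Matrix (Fin 2) (Fin 2) ℝ}

/-- Fixed points of `h` are zeros of a trigonometric polynomial `Q` of degree one in `2 x`, and
`Q` has constant sign on forward arcs. Two forward arcs within one period would give `Q` three
zeros there, or, if they touch, a zero that is a local extremum: either forces `Q = 0`. -/
theorem left_eq_of_isForwardArc (hM : IsMoebiusLift h M) {a₁ b₁ a b : ℝ}
    (h₁ : IsForwardArc h a₁ b₁) (h₂ : IsForwardArc h a b) (ha : a ∈ Ico a₁ (a₁ + π)) :
    a = a₁ := by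
  obtain ⟨α, β, γ, c, hc, hcQ⟩ := hM.exists_sin_sub_eq_mul
  obtain ⟨hhm, -, -, hπ, -⟩ := hM
  have hQ : ∀ x, IsFixedPt h x → α + β * sin (2 * x) + γ * cos (2 * x) = 0 := fun x hx => by
    simpa [hx.eq, (hcQ x).1] using (hcQ x).2
  have hmid : (a₁ + b₁) / 2 ∈ Ioo a₁ b₁ := ⟨by linarith [h₁.lt], by linarith [h₁.lt]⟩
  have hQmid : α + β * sin (2 * ((a₁ + b₁) / 2)) + γ * cos (2 * ((a₁ + b₁) / 2)) ≠ 0 := by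
    intro h0
    have := h₁.sin_sub_pos hhm hπ hmid
    rw [(hcQ _).2, h0, mul_zero] at this
    exact lt_irrefl _ this
  by_contra hne
  have ha₁ : a₁ < a := lt_of_le_of_ne ha.1 (Ne.symm hne)
  have hb₁ : b₁ ≤ a := not_lt.1 fun hab₁ =>
    (h₁.lt_apply a ⟨ha₁, hab₁⟩).ne' h₂.isFixedPt_left.eq
  have hb : b ≤ a₁ + π := not_lt.1 fun hba₁ =>
    (h₂.lt_apply (a₁ + π) ⟨ha.2, hba₁⟩).ne' (by rw [hπ, h₁.isFixedPt_left.eq])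
  obtain ⟨rfl, rfl, rfl⟩ : α = 0 ∧ β = 0 ∧ γ = 0 := by
    rcases hb₁.lt_or_eq with hlt | rfl
    · exact trig_coeffs_eq_zero_of_three_zeros h₁.lt hlt ha.2 (hQ _ h₁.isFixedPt_left)
        (hQ _ h₁.isFixedPt_right) (hQ _ h₂.isFixedPt_left)
    · refine trig_coeffs_eq_zero_of_double_zero h₁.lt ha.2 (hQ _ h₁.isFixedPt_left)
        (hQ _ h₁.isFixedPt_right) ?_
      -- `sin (h x - x) = c x * Q x` is positive on both sides of `b₁`
      have hpos : ∀ᶠ x in 𝓝[≠] b₁, 0 < c x * (α + β * sin (2 * x) + γ * cos (2 * x)) := by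
        filter_upwards [nhdsWithin_le_nhds (Ioo_mem_nhds h₁.lt h₂.lt), self_mem_nhdsWithin]
          with x hx hxb₁
        rw [← (hcQ x).2]
        rcases Ne.lt_or_gt hxb₁ with hlt | hgt
        · exact h₁.sin_sub_pos hhm hπ ⟨hx.1, hlt⟩
        · exact h₂.sin_sub_pos hhm hπ ⟨hgt, hx.2⟩
      have := (hasDerivAt_trig α β γ b₁).eq_zero_of_eventually_mul_pos
        (hQ _ h₁.isFixedPt_right) hc.continuousAt (hcQ b₁).1 hpos
      linarith
  exact hQmid (by ring)

theorem exists_eq_add_int_mul_of_isForwardArc (hM : IsMoebiusLift h M) {a₁ b₁ a₂ b₂ : ℝ}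
    (h₁ : IsForwardArc h a₁ b₁) (h₂ : IsForwardArc h a₂ b₂) :
    ∃ n : ℤ, a₂ = a₁ + n * π ∧ b₂ = b₁ + n * π := by
  obtain ⟨m, hm, -⟩ := existsUnique_add_zsmul_mem_Ico pi_pos a₂ a₁
  rw [zsmul_eq_mul] at hm
  have ⟨_, _, _, hπ, _⟩ := hM
  have h₃ := h₂.add_int_mul hπ m
  have ha := hM.left_eq_of_isForwardArc h₁ h₃ hm
  have hb := (ha ▸ h₃).right_unique h₁
  exact ⟨-m, by push_cast; linarith, by push_cast; linarith⟩

end IsMoebiusLift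

section DevelopingMap

variable {φ h : ℝ → ℝ}

theorem lt_apply_of_mem_range (hm : StrictMono φ) (hq : ∀ x, φ (x + 1) = h (φ x)) :
    ∀ t ∈ range φ, t < h t := by
  rintro _ ⟨x, rfl⟩
  rw [← hq x]
  exact hm (lt_add_one x)

theorem image_range_eq_range (hq : ∀ x, φ (x + 1) = h (φ x)) : h '' range φ = range φ := by
  rw [← range_comp, show h ∘ φ = φ ∘ (· + 1) from funext fun x => (hq x).symm,
    (add_right_surjective 1).range_comp]

theorem isFixedPt_sSup_range (hhc : Continuous h) (hhm : Monotone h)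
    (hq : ∀ x, φ (x + 1) = h (φ x)) (hbdd : BddAbove (range φ)) :
    IsFixedPt h (sSup (range φ)) := by
  have := hhm.map_csSup_of_continuousAt hhc.continuousAt (range_nonempty φ) hbdd
  rwa [image_range_eq_range hq] at this

theorem isFixedPt_sInf_range (hhc : Continuous h) (hhm : Monotone h)
    (hq : ∀ x, φ (x + 1) = h (φ x)) (hbdd : BddBelow (range φ)) :
    IsFixedPt h (sInf (range φ)) := by
  have := hhm.map_csInf_of_continuousAt hhc.continuousAt (range_nonempty φ) hbdd
  rwa [image_range_eq_range hq] at this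

theorem range_eq_univ_of_forall_lt_apply (hc : Continuous φ) (hhc : Continuous h)
    (hhm : Monotone h) (hq : ∀ x, φ (x + 1) = h (φ x)) (hall : ∀ t, t < h t) :
    range φ = univ :=
  (isPreconnected_range hc).eq_univ_of_unbounded
    (fun hbdd => (hall _).ne' (isFixedPt_sInf_range hhc hhm hq hbdd))
    (fun hbdd => (hall _).ne' (isFixedPt_sSup_range hhc hhm hq hbdd))

/-- A range unbounded on one side contains a whole period, on which `h` moves points forward. -/
theorem forall_lt_apply_of_not_bddAbove_or_not_bddBelow (hc : Continuous φ) (hm : StrictMono φ)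
    {p : ℝ} (hp : 0 < p) (hper : ∀ x, h (x + p) = h x + p) (hq : ∀ x, φ (x + 1) = h (φ x))
    (hbdd : ¬BddAbove (range φ) ∨ ¬BddBelow (range φ)) : ∀ t, t < h t := by
  have hconn := isPreconnected_range hc
  rcases hbdd with hbdd | hbdd
  · refine forall_lt_apply_of_forall_Ico hp hper (s := φ 0) fun t ht => ?_
    obtain ⟨_, ⟨y, rfl⟩, hy⟩ := not_bddAbove_iff.1 hbdd t
    exact lt_apply_of_mem_range hm hq t
      (hconn.ordConnected.out (mem_range_self 0) (mem_range_self y) ⟨ht.1, hy.le⟩)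
  · refine forall_lt_apply_of_forall_Ico hp hper (s := φ 0 - p) fun t ht => ?_
    obtain ⟨_, ⟨y, rfl⟩, hy⟩ := not_bddBelow_iff.1 hbdd t
    exact lt_apply_of_mem_range hm hq t
      (hconn.ordConnected.out (mem_range_self y) (mem_range_self 0) ⟨hy.le, by linarith [ht.2]⟩)

theorem exists_isForwardArc_range_eq_Ioo (hc : Continuous φ) (hm : StrictMono φ)
    (hhc : Continuous h) (hhm : Monotone h) {p : ℝ} (hp : 0 < p)
    (hper : ∀ x, h (x + p) = h x + p) (hq : ∀ x, φ (x + 1) = h (φ x)) (hfix : ∃ t, h t ≤ t) :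
    ∃ a b, IsForwardArc h a b ∧ range φ = Ioo a b := by
  obtain ⟨t, ht⟩ := hfix
  have hgt := lt_apply_of_mem_range hm hq
  have hbdd : BddAbove (range φ) ∧ BddBelow (range φ) := by
    by_contra hbdd
    exact ht.not_gt (forall_lt_apply_of_not_bddAbove_or_not_bddBelow hc hm hp hper hq
      (not_and_or.1 hbdd) t)
  have ha := isFixedPt_sInf_range hhc hhm hq hbdd.2
  have hb := isFixedPt_sSup_range hhc hhm hq hbdd.1
  have hrange : range φ = Ioo (sInf (range φ)) (sSup (range φ)) := by
    refine Subset.antisymm (fun s hs => ⟨?_, ?_⟩)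
      ((isConnected_range hc).Ioo_csInf_csSup_subset hbdd.2 hbdd.1)
    · exact (csInf_le hbdd.2 hs).lt_of_ne fun he => (hgt s hs).ne (he ▸ ha.eq.symm)
    · exact (le_csSup hbdd.1 hs).lt_of_ne fun he => (hgt s hs).ne (he ▸ hb.eq.symm)
  have hlt : sInf (range φ) < sSup (range φ) := by
    have := hrange ▸ mem_range_self (f := φ) 0
    exact this.1.trans this.2
  exact ⟨_, _, ⟨hlt, ha, hb, fun x hx => hgt x (hrange ▸ hx)⟩, hrange⟩

end DevelopingMap

theorem exists_equivariant_conj_of_range_shift {φ₁ φ₂ h : ℝ → ℝ} {p : ℝ}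
    (h1m : StrictMono φ₁) (h2m : StrictMono φ₂)
    (hq1 : ∀ x, φ₁ (x + 1) = h (φ₁ x)) (hq2 : ∀ x, φ₂ (x + 1) = h (φ₂ x))
    (hper : ∀ x, h (x + p) = h x + p)
    (hrange : ∃ n : ℤ, ∀ t, t ∈ range φ₁ ↔ t + n * p ∈ range φ₂) :
    ∃ F G : ℝ → ℝ, Continuous F ∧ StrictMono F ∧
      (∀ x, F (G x) = x) ∧ (∀ x, G (F x) = x) ∧
      (∀ x, F (x + 1) = F x + 1) ∧
      ∃ n : ℤ, ∀ x, φ₂ x = φ₁ (G x) + n * p := by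
  obtain ⟨n, hn⟩ := hrange
  choose F hF using fun x => (hn (φ₁ x)).1 (mem_range_self x)
  choose G hG using fun x => (hn (φ₂ x - n * p)).2 (by simp)
  have hFG : ∀ x, F (G x) = x := fun x => h2m.injective (by rw [hF, hG, sub_add_cancel])
  have hGF : ∀ x, G (F x) = x := fun x => h1m.injective (by rw [hG, hF, add_sub_cancel_right])
  have hFm : StrictMono F := fun x y hxy =>
    h2m.lt_iff_lt.1 (by rw [hF, hF]; linarith [h1m hxy])
  refine ⟨F, G, hFm.monotone.continuous_of_surjective fun y => ⟨G y, hFG y⟩, hFm, hFG, hGF,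
    fun x => h2m.injective ?_, n, fun x => by rw [hG, sub_add_cancel]⟩
  rw [hF, hq1, hq2, hF, apply_add_int_mul hper]

/-- Two developing maps `γᵢ = (sin φᵢ : cos φᵢ)` with the same lifted monodromy `h̃`
differ by a ℤ-equivariant diffeomorphism `F` of `ℝ`: `γ₂ = γ₁ ∘ F⁻¹`, i.e.
`φ₂ = φ₁ ∘ F⁻¹` up to a constant integer multiple of `π`. -/
theorem developing_maps_same_monodromy
    (φ₁ φ₂ h : ℝ → ℝ) (M : Matrix (Fin 2) (Fin 2) ℝ)
    (h1c : Continuous φ₁) (h1m : StrictMono φ₁)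
    (h2c : Continuous φ₂) (h2m : StrictMono φ₂)
    (hM : IsMoebiusLift h M)
    (hq1 : ∀ x, φ₁ (x + 1) = h (φ₁ x))
    (hq2 : ∀ x, φ₂ (x + 1) = h (φ₂ x)) :
    ∃ F G : ℝ → ℝ, Continuous F ∧ StrictMono F ∧
      (∀ x, F (G x) = x) ∧ (∀ x, G (F x) = x) ∧
      (∀ x, F (x + 1) = F x + 1) ∧
      ∃ n : ℤ, ∀ x, φ₂ x = φ₁ (G x) + n * π := by
  have ⟨hhm, hhc, _, hπ, _⟩ := hM
  refine exists_equivariant_conj_of_range_shift h1m h2m hq1 hq2 hπ ?_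
  by_cases hall : ∀ t, t < h t
  · refine ⟨0, fun t => ?_⟩
    simp [range_eq_univ_of_forall_lt_apply h1c hhc hhm.monotone hq1 hall,
      range_eq_univ_of_forall_lt_apply h2c hhc hhm.monotone hq2 hall]
  · push Not at hall
    obtain ⟨a₁, b₁, harc₁, hr₁⟩ :=
      exists_isForwardArc_range_eq_Ioo h1c h1m hhc hhm.monotone pi_pos hπ hq1 hall
    obtain ⟨a₂, b₂, harc₂, hr₂⟩ :=
      exists_isForwardArc_range_eq_Ioo h2c h2m hhc hhm.monotone pi_pos hπ hq2 hall
    obtain ⟨n, rfl, rfl⟩ := hM.exists_eq_add_int_mul_of_isForwardArc harc₁ harc₂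
    exact ⟨n, fun t => by simp [hr₁, hr₂]⟩
end

section
/- Let N = ℝ²/∼ where ∼ is generated by (x,y) ∼ (x, y + 1/x) for x ≠ 0. Then N is a smooth Hausdorff manifold, the ℝ-action t·[(x,y)] = [(x, y − t)] is well-defined and locally free, its orbit space is ℝ, and the stabilizer of [(x,y)] is trivial if x = 0 and equals (1/x)ℤ if x ≠ 0. -/
open Real

/-- The generating relation on `ℝ²`: `(x,y) ∼ (x, y + 1/x)` for `x ≠ 0`. -/
def genRel (p q : ℝ × ℝ) : Prop := p.1 = q.1 ∧ p.1 ≠ 0 ∧ q.2 = p.2 + 1 / p.1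

/-- The equivalence relation generated by `genRel`, described explicitly. -/
def nRel (p q : ℝ × ℝ) : Prop :=
  p.1 = q.1 ∧ ((p.1 = 0 ∧ p.2 = q.2) ∨ (p.1 ≠ 0 ∧ ∃ n : ℤ, q.2 = p.2 + n / p.1))

/-!
Writing `Λ x` for the subgroup `ℤ • x⁻¹` of `ℝ`, two points are related iff they have the same
first coordinate `x` and their second coordinates differ by an element of `Λ x`. Everything about
the relation and the action `y ↦ y - t` is then arithmetic in `Λ x`. For Hausdorffness, the map
`(x, y) ↦ (x, x y mod 1, sin (2π x y) / (2π x))`, whose last entry extends continuously by `y` to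
`x = 0`, is continuous and separates exactly the classes.
-/

open AddSubgroup

-- Since `0⁻¹ = 0` and `zmultiples 0 = ⊥`, this also covers the degenerate fibre `x = 0`.
lemma mem_zmultiples_inv_iff {x t : ℝ} :
    t ∈ zmultiples x⁻¹ ↔ (x = 0 ∧ t = 0) ∨ (x ≠ 0 ∧ ∃ n : ℤ, t = n / x) := by
  rcases eq_or_ne x 0 with rfl | hx
  · simp
  · simp [hx, mem_zmultiples_iff, div_eq_mul_inv, eq_comm]

lemma nRel_iff {p q : ℝ × ℝ} : nRel p q ↔ p.1 = q.1 ∧ q.2 - p.2 ∈ zmultiples p.1⁻¹ := by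
  simp only [nRel, mem_zmultiples_inv_iff, sub_eq_iff_eq_add', add_zero, eq_comm (a := p.2)]

lemma nRel_equivalence : Equivalence nRel where
  refl p := nRel_iff.2 ⟨rfl, by simp⟩
  symm {p q} h := by
    obtain ⟨h1, h2⟩ := nRel_iff.1 h
    exact nRel_iff.2 ⟨h1.symm, h1 ▸ neg_sub q.2 p.2 ▸ neg_mem h2⟩
  trans {p q r} hpq hqr := by
    obtain ⟨h1, h2⟩ := nRel_iff.1 hpq
    obtain ⟨h1', h2'⟩ := nRel_iff.1 hqr
    exact nRel_iff.2 ⟨h1.trans h1', sub_add_sub_cancel r.2 q.2 p.2 ▸ add_mem (h1 ▸ h2') h2⟩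

lemma genRel_le_nRel : genRel ≤ nRel := fun p q ⟨h1, _, h2⟩ =>
  nRel_iff.2 ⟨h1, by simp [h2]⟩

lemma eqvGen_genRel_add_zsmul {x : ℝ} (hx : x ≠ 0) (y : ℝ) (n : ℤ) :
    Relation.EqvGen genRel (x, y) (x, y + n • x⁻¹) := by
  induction n using Int.induction_on with
  | zero => simpa using Relation.EqvGen.refl (x, y)
  | succ n ih =>
    refine ih.trans _ _ _ (Relation.EqvGen.rel _ _ ⟨rfl, hx, ?_⟩)
    simp only [add_smul, one_smul, one_div]; ring
  | pred n ih =>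
    refine ih.trans _ _ _ (Relation.EqvGen.symm _ _ (Relation.EqvGen.rel _ _ ⟨rfl, hx, ?_⟩))
    simp only [sub_smul, one_smul, one_div]; ring

lemma eqvGen_genRel_iff {p q : ℝ × ℝ} : Relation.EqvGen genRel p q ↔ nRel p q := by
  refine ⟨fun h => nRel_equivalence.eqvGen_iff.1 (Relation.EqvGen.mono genRel_le_nRel _ _ h),
    fun h => ?_⟩
  obtain ⟨x, y⟩ := p
  obtain ⟨x', y'⟩ := q
  obtain ⟨rfl, hy⟩ := nRel_iff.1 h
  obtain ⟨n, hn⟩ := mem_zmultiples_iff.1 hy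
  obtain rfl : y' = y + n • x⁻¹ := by rw [hn]; ring
  rcases eq_or_ne x 0 with rfl | hx
  · simpa using Relation.EqvGen.refl (0, y)
  · exact eqvGen_genRel_add_zsmul hx y n

theorem t2Space_quotient_of_continuous {X Y : Type*} [TopologicalSpace X] [TopologicalSpace Y]
    [T2Space Y] {s : Setoid X} {f : X → Y} (hf : Continuous f) (hs : ∀ a b, s a b ↔ f a = f b) :
    T2Space (Quotient s) :=
  T2Space.of_injective_continuous (f := Quotient.lift f fun a b h => (hs a b).1 h)
    (fun a b => Quotient.inductionOn₂ a b fun a b h => Quotient.sound ((hs a b).2 h))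
    (hf.quotient_lift _)

noncomputable def nRelClassMap (p : ℝ × ℝ) : ℝ × AddCircle (1 : ℝ) × ℝ :=
  (p.1, ↑(p.1 * p.2), p.2 * sinc (2 * π * p.1 * p.2))

lemma continuous_nRelClassMap : Continuous nRelClassMap := by
  unfold nRelClassMap
  fun_prop

lemma coe_mul_eq_coe_mul_iff {x : ℝ} (hx : x ≠ 0) (y y' : ℝ) :
    ((x * y : ℝ) : AddCircle (1 : ℝ)) = ↑(x * y') ↔ y' - y ∈ zmultiples x⁻¹ := by
  rw [QuotientAddGroup.eq, mem_zmultiples_iff, mem_zmultiples_iff]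
  refine exists_congr fun n => ?_
  rw [zsmul_eq_mul, zsmul_eq_mul, mul_one]
  constructor <;> intro h
  · field_simp; linarith
  · field_simp at h; linarith

lemma mul_sinc_two_pi_mul {x : ℝ} (hx : x ≠ 0) (y : ℝ) :
    y * sinc (2 * π * x * y) = sin (2 * π * (x * y)) / (2 * π * x) := by
  rcases eq_or_ne y 0 with rfl | hy
  · simp
  · rw [sinc_of_ne_zero (by positivity)]
    field_simp

lemma nRelClassMap_eq_iff {p q : ℝ × ℝ} : nRelClassMap p = nRelClassMap q ↔ nRel p q := by
  obtain ⟨x, y⟩ := p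
  obtain ⟨x', y'⟩ := q
  simp only [nRelClassMap, nRel_iff, Prod.mk.injEq]
  refine and_congr_right fun hx' => ?_
  subst hx'
  rcases eq_or_ne x 0 with rfl | hx
  · simp [sub_eq_zero, eq_comm]
  · rw [coe_mul_eq_coe_mul_iff hx]
    refine ⟨And.left, fun h => ⟨h, ?_⟩⟩
    obtain ⟨n, hn⟩ := mem_zmultiples_iff.1 h
    have hxy' : x * y' = x * y + n := by
      rw [eq_add_of_sub_eq' hn.symm, zsmul_eq_mul]; field_simp
    rw [mul_sinc_two_pi_mul hx, mul_sinc_two_pi_mul hx, hxy', mul_add, mul_comm (2 * π) (n : ℝ),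
      sin_add_int_mul_two_pi]

/-- For `N = ℝ²/∼`, with `∼` generated by `(x,y) ∼ (x, y+1/x)` for `x ≠ 0`:
the explicit relation `nRel` is an equivalence relation and is the equivalence
relation generated by the generating relation; the `ℝ`-action `t·(x,y) = (x, y−t)`
descends to `N`; the orbit space of this action is `ℝ` (two points lie in the same
orbit iff they have the same first coordinate); the stabilizer of `[(x,y)]` is trivial
for `x = 0` and equals `(1/x)ℤ` for `x ≠ 0`; and `N` is Hausdorff. -/
theorem circle_family_quotient :
    Equivalence nRel ∧
    (∀ p q, Relation.EqvGen genRel p q ↔ nRel p q) ∧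
    (∀ (t : ℝ) (p q : ℝ × ℝ), nRel p q → nRel (p.1, p.2 - t) (q.1, q.2 - t)) ∧
    (∀ p q : ℝ × ℝ, (∃ t : ℝ, nRel (p.1, p.2 - t) q) ↔ p.1 = q.1) ∧
    (∀ x y t : ℝ, nRel (x, y - t) (x, y) ↔ (x = 0 ∧ t = 0) ∨ (x ≠ 0 ∧ ∃ n : ℤ, t = n / x)) ∧
    T2Space (Quotient (Relation.EqvGen.setoid genRel)) := by
  refine ⟨nRel_equivalence, fun _ _ => eqvGen_genRel_iff, fun t p q h => ?_, fun p q => ?_,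
    fun x y t => ?_, t2Space_quotient_of_continuous continuous_nRelClassMap fun p q =>
      eqvGen_genRel_iff.trans nRelClassMap_eq_iff.symm⟩
  · simpa [nRel_iff] using h
  · refine ⟨fun ⟨t, h⟩ => (nRel_iff.1 h).1, fun h => ⟨p.2 - q.2, nRel_iff.2 ⟨h, by simp⟩⟩⟩
  · simp [nRel_iff, mem_zmultiples_inv_iff]
end

section
/- Let u₁, u₂ solve u'' + Tu = 0 with u₁'u₂ − u₁u₂' = 1. With τ = [[u₁', u₂'],[u₁, u₂]] ∈ SL(2,ℝ), A = −τ'τ⁻¹ = [[0, T],[−1, 0]], and (for a smooth family in a parameter) Ξ̌ = (dτ)τ⁻¹, one has: Ξ̌ = [[−½Θ', ½Θ'' + TΘ],[−Θ, ½Θ']] where Θ = u₁du₂ − u₂du₁, Θ' = 2(u₁'du₂ − u₂'du₁), Θ'' = −2TΘ + 2(u₁'du₂' − u₂'du₁'); and the covariant derivative satisfies ∂_A Ξ̌ := Ξ̌' + [A, Ξ̌] = [[0, −D_LΘ],[0, 0]] where D_LΘ = −(½Θ''' + T'Θ + 2TΘ'). Consequently tr(Ξ̌ ∂_A Ξ̌)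 = Θ·(D_LΘ). -/
open Real Matrix

private lemma hdFst {f : ℝ × ℝ → ℝ} (hf : ContDiff ℝ (⊤ : ℕ∞) f) (s x : ℝ) :
    HasDerivAt (fun a => f (a, x)) (fderiv ℝ f (s, x) (1, 0)) s := by
  have h := (hf.differentiable (by simp) (s, x)).hasFDerivAt
  exact (h.comp s (hasFDerivAt_prodMk_left (𝕜 := ℝ) s x)).hasDerivAt

private lemma hdSnd {f : ℝ × ℝ → ℝ} (hf : ContDiff ℝ (⊤ : ℕ∞) f) (s x : ℝ) :
    HasDerivAt (fun y => f (s, y)) (fderiv ℝ f (s, x) (0, 1)) x := by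
  have h := (hf.differentiable (by simp) (s, x)).hasFDerivAt
  exact (h.comp x (hasFDerivAt_prodMk_right (𝕜 := ℝ) s x)).hasDerivAt

private lemma hdApplyFst {f : ℝ × ℝ → ℝ} (hf : ContDiff ℝ (⊤ : ℕ∞) f) (v : ℝ × ℝ) (s x : ℝ) :
    HasDerivAt (fun a => fderiv ℝ f (a, x) v) (fderiv ℝ (fderiv ℝ f) (s, x) (1, 0) v) s := by
  have hD : HasFDerivAt (fderiv ℝ f) (fderiv ℝ (fderiv ℝ f) (s, x)) (s, x) :=
    (((hf.fderiv_right (m := 1) (WithTop.coe_le_coe.mpr le_top)).differentiable one_ne_zero) _).hasFDerivAt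
  have h := (hD.clm_apply (hasFDerivAt_const v _)).comp s
    (hasFDerivAt_prodMk_left (𝕜 := ℝ) s x)
  have h' : HasDerivAt (fun a => fderiv ℝ f (a, x) v) _ s := h.hasDerivAt
  simpa using h'

private lemma hdApplySnd {f : ℝ × ℝ → ℝ} (hf : ContDiff ℝ (⊤ : ℕ∞) f) (v : ℝ × ℝ) (s x : ℝ) :
    HasDerivAt (fun y => fderiv ℝ f (s, y) v) (fderiv ℝ (fderiv ℝ f) (s, x) (0, 1) v) x := by
  have hD : HasFDerivAt (fderiv ℝ f) (fderiv ℝ (fderiv ℝ f) (s, x)) (s, x) :=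
    (((hf.fderiv_right (m := 1) (WithTop.coe_le_coe.mpr le_top)).differentiable one_ne_zero) _).hasFDerivAt
  have h := (hD.clm_apply (hasFDerivAt_const v _)).comp x
    (hasFDerivAt_prodMk_right (𝕜 := ℝ) s x)
  have h' : HasDerivAt (fun y => fderiv ℝ f (s, y) v) _ x := h.hasDerivAt
  simpa using h'

private lemma hdMixed {f : ℝ × ℝ → ℝ} (hf : ContDiff ℝ (⊤ : ℕ∞) f) (s x : ℝ) :
    HasDerivAt (fun y => deriv (fun a => f (a, y)) s)
      (deriv (fun a => deriv (fun y => f (a, y)) x) s) x := by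
  have e1 : (fun y => deriv (fun a => f (a, y)) s) = fun y => fderiv ℝ f (s, y) (1, 0) :=
    funext fun y => (hdFst hf s y).deriv
  have e2 : deriv (fun a => deriv (fun y => f (a, y)) x) s
      = fderiv ℝ (fderiv ℝ f) (s, x) (0, 1) (1, 0) := by
    have e2' : (fun a => deriv (fun y => f (a, y)) x) = fun a => fderiv ℝ f (a, x) (0, 1) :=
      funext fun a => (hdSnd hf a x).deriv
    rw [e2', (hdApplyFst hf (0, 1) s x).deriv]
    exact ((hf.contDiffAt.isSymmSndFDerivAt (by rw [minSmoothness_of_isRCLikeNormedField]; exact WithTop.coe_le_coe.mpr (le_top : (2:ℕ∞) ≤ ⊤))).eq _ _).symm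
  rw [e1, e2]
  exact hdApplySnd hf (1, 0) s x

private lemma pack (T : ℝ → ℝ) (u : ℝ → ℝ → ℝ)
    (hu : ContDiff ℝ (⊤ : ℕ∞) (fun p : ℝ × ℝ => u p.1 p.2))
    (ode : ∀ s x, deriv^[2] (u s) x = -(T x * u s x)) (s x : ℝ) :
    HasDerivAt (fun a => u a x) (deriv (fun a => u a x) s) s ∧
    HasDerivAt (fun a => deriv (u a) x) (deriv (fun a => deriv (u a) x) s) s ∧
    HasDerivAt (u s) (deriv (u s) x) x ∧
    HasDerivAt (deriv (u s)) (-(T x * u s x)) x ∧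
    HasDerivAt (fun y => deriv (fun a => u a y) s) (deriv (fun a => deriv (u a) x) s) x ∧
    HasDerivAt (fun y => deriv (fun a => deriv (u a) y) s)
      (-(T x * deriv (fun a => u a x) s)) x := by
  have hus : ContDiff ℝ (⊤ : ℕ∞) (u s) := hu.comp (contDiff_const.prodMk contDiff_id)
  have A1 : HasDerivAt (fun a => u a x) (deriv (fun a => u a x) s) s :=
    (hdFst hu s x).differentiableAt.hasDerivAt
  have A2 : HasDerivAt (fun a => deriv (u a) x) (deriv (fun a => deriv (u a) x) s) s := by
    have e : (fun a => deriv (u a) x) = fun a => fderiv ℝ (fun p : ℝ × ℝ => u p.1 p.2) (a, x) (0, 1) :=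
      funext fun a => (hdSnd hu a x).deriv
    rw [e]
    exact (hdApplyFst hu (0, 1) s x).differentiableAt.hasDerivAt
  have A3 : HasDerivAt (u s) (deriv (u s) x) x :=
    ((hus.differentiable (by simp)) x).hasDerivAt.differentiableAt.hasDerivAt
  have A4 : HasDerivAt (deriv (u s)) (-(T x * u s x)) x := by
    have e : deriv (u s) = fun y => fderiv ℝ (u s) y 1 := funext fun y => (fderiv_apply_one_eq_deriv).symm
    have hdiff : DifferentiableAt ℝ (deriv (u s)) x := by
      rw [e]; exact ((hus.fderiv_right (m := 1) (WithTop.coe_le_coe.mpr le_top)).clm_apply contDiff_const).differentiable one_ne_zero x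
    have h := hdiff.hasDerivAt
    have e2 : deriv (deriv (u s)) x = -(T x * u s x) := ode s x
    rwa [e2] at h
  have A5 : HasDerivAt (fun y => deriv (fun a => u a y) s)
      (deriv (fun a => deriv (u a) x) s) x := hdMixed hu s x
  have A6 : HasDerivAt (fun y => deriv (fun a => deriv (u a) y) s)
      (-(T x * deriv (fun a => u a x) s)) x := by
    have hgc : ContDiff ℝ (⊤ : ℕ∞) (fun p : ℝ × ℝ => fderiv ℝ (fun q : ℝ × ℝ => u q.1 q.2) p (0, 1)) :=
      (hu.fderiv_right (by simp)).clm_apply contDiff_const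
    have e : (fun y => deriv (fun a => deriv (u a) y) s)
        = fun y => deriv (fun a => (fun p : ℝ × ℝ => fderiv ℝ (fun q : ℝ × ℝ => u q.1 q.2) p (0, 1)) (a, y)) s := by
      funext y; congr 1; funext a; exact (hdSnd hu a y).deriv
    rw [e]
    have h := hdMixed hgc s x
    have ev : deriv (fun a => deriv (fun y =>
        (fun p : ℝ × ℝ => fderiv ℝ (fun q : ℝ × ℝ => u q.1 q.2) p (0, 1)) (a, y)) x) s
        = -(T x * deriv (fun a => u a x) s) := by
      have e2 : (fun a => deriv (fun y =>
          (fun p : ℝ × ℝ => fderiv ℝ (fun q : ℝ × ℝ => u q.1 q.2) p (0, 1)) (a, y)) x)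
          = fun a => -(T x * u a x) := by
        funext a
        have e3 : (fun y => (fun p : ℝ × ℝ => fderiv ℝ (fun q : ℝ × ℝ => u q.1 q.2) p (0, 1)) (a, y))
            = deriv (fun y => u a y) := funext fun y => ((hdSnd hu a y).deriv).symm
        rw [e3]
        exact ode a x
      rw [e2]
      exact (((hdFst hu s x).differentiableAt.hasDerivAt.const_mul (T x)).neg).deriv
    rw [ev] at h
    exact h
  exact ⟨A1, A2, A3, A4, A5, A6⟩


/-- Drinfeld–Sokolov computation: for a smooth family of normalized fundamental
systems `u₁(s,·), u₂(s,·)` of the Hill equation `u'' + Tu = 0` with Wronskian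
`u₁'u₂ − u₁u₂' = 1`, set `τ = [[u₁',u₂'],[u₁,u₂]]`, `A = [[0,T],[−1,0]]`,
`Ξ̌ = (dτ)τ⁻¹` (differential in the parameter `s`) and
`Θ = u₁du₂ − u₂du₁`.  Then `Θ' = 2(u₁'du₂ − u₂'du₁)`,
`Θ'' = −2TΘ + 2(u₁'du₂' − u₂'du₁')`,
`Ξ̌ = [[−½Θ', ½Θ'' + TΘ],[−Θ, ½Θ']]`,
`∂_AΞ̌ := Ξ̌' + [A,Ξ̌] = [[0, −D_LΘ],[0,0]]` with `D_LΘ = −(½Θ''' + T'Θ + 2TΘ')`,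
and `tr(Ξ̌ ∂_AΞ̌) = Θ·D_LΘ`. -/
theorem xi_check_computation (T : ℝ → ℝ) (u₁ u₂ : ℝ → ℝ → ℝ)
    (hT : ContDiff ℝ (⊤ : ℕ∞) T)
    (h1 : ContDiff ℝ (⊤ : ℕ∞) (fun p : ℝ × ℝ => u₁ p.1 p.2))
    (h2 : ContDiff ℝ (⊤ : ℕ∞) (fun p : ℝ × ℝ => u₂ p.1 p.2))
    (ode1 : ∀ s x, deriv^[2] (u₁ s) x = -(T x * u₁ s x))
    (ode2 : ∀ s x, deriv^[2] (u₂ s) x = -(T x * u₂ s x))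
    (wron : ∀ s x, deriv (u₁ s) x * u₂ s x - u₁ s x * deriv (u₂ s) x = 1) :
    let d₁ : ℝ → ℝ → ℝ := fun s x => deriv (fun a => u₁ a x) s
    let d₂ : ℝ → ℝ → ℝ := fun s x => deriv (fun a => u₂ a x) s
    let d₁' : ℝ → ℝ → ℝ := fun s x => deriv (fun a => deriv (u₁ a) x) s
    let d₂' : ℝ → ℝ → ℝ := fun s x => deriv (fun a => deriv (u₂ a) x) s
    let Θ : ℝ → ℝ → ℝ := fun s x => u₁ s x * d₂ s x - u₂ s x * d₁ s x
    let τ : ℝ → ℝ → Matrix (Fin 2) (Fin 2) ℝ :=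
      fun s x => !![deriv (u₁ s) x, deriv (u₂ s) x; u₁ s x, u₂ s x]
    let A : ℝ → Matrix (Fin 2) (Fin 2) ℝ := fun x => !![0, T x; -1, 0]
    let Ξ : ℝ → ℝ → Matrix (Fin 2) (Fin 2) ℝ :=
      fun s x => !![d₁' s x, d₂' s x; d₁ s x, d₂ s x] * (τ s x)⁻¹
    let Ξ' : ℝ → ℝ → Matrix (Fin 2) (Fin 2) ℝ :=
      fun s x => Matrix.of fun i j => deriv (fun y => Ξ s y i j) x
    let DLΘ : ℝ → ℝ → ℝ := fun s x =>
      -((1/2) * deriv^[3] (Θ s) x + deriv T x * Θ s x + 2 * T x * deriv (Θ s) x)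
    ∀ s x,
      (deriv (Θ s) x
        = 2 * (deriv (u₁ s) x * d₂ s x - deriv (u₂ s) x * d₁ s x)) ∧
      (deriv^[2] (Θ s) x
        = -2 * T x * Θ s x
          + 2 * (deriv (u₁ s) x * d₂' s x - deriv (u₂ s) x * d₁' s x)) ∧
      (Ξ s x = !![-(1/2) * deriv (Θ s) x,
                  (1/2) * deriv^[2] (Θ s) x + T x * Θ s x;
                  -(Θ s x), (1/2) * deriv (Θ s) x]) ∧
      (Ξ' s x + (A x * Ξ s x - Ξ s x * A x) = !![0, -(DLΘ s x); 0, 0]) ∧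
      ((Ξ s x * (Ξ' s x + (A x * Ξ s x - Ξ s x * A x))).trace
        = Θ s x * DLΘ s x) := by
  intro d₁ d₂ d₁' d₂' Θ τ A Ξ Ξ' DLΘ s x
  simp only [d₁, d₂, d₁', d₂', Θ, τ, A, Ξ, Ξ', DLΘ]
  have hz : ∀ y : ℝ, deriv (fun a => deriv (u₁ a) y) s * u₂ s y + deriv (u₁ s) y * deriv (fun a => u₂ a y) s
      - (deriv (fun a => u₁ a y) s * deriv (u₂ s) y + u₁ s y * deriv (fun a => deriv (u₂ a) y) s) = 0 := by
    intro y
    obtain ⟨Q1, Q2, Q3, Q4, Q5, Q6⟩ := pack T u₁ h1 ode1 s y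
    obtain ⟨R1, R2, R3, R4, R5, R6⟩ := pack T u₂ h2 ode2 s y
    have hL : HasDerivAt (fun a => deriv (u₁ a) y * u₂ a y - u₁ a y * deriv (u₂ a) y)
        (deriv (fun a => deriv (u₁ a) y) s * u₂ s y + deriv (u₁ s) y * deriv (fun a => u₂ a y) s
          - (deriv (fun a => u₁ a y) s * deriv (u₂ s) y + u₁ s y * deriv (fun a => deriv (u₂ a) y) s)) s := (Q2.mul R1).sub (Q1.mul R2)
    have hc : HasDerivAt (fun a => deriv (u₁ a) y * u₂ a y - u₁ a y * deriv (u₂ a) y) 0 s := by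
      have efn : (fun a => deriv (u₁ a) y * u₂ a y - u₁ a y * deriv (u₂ a) y) = fun _ => (1:ℝ) :=
        funext fun a => wron a y
      rw [efn]; exact hasDerivAt_const s 1
    exact hL.unique hc
  have W : ∀ y : ℝ, HasDerivAt (fun z => u₁ s z * deriv (fun a => u₂ a z) s - u₂ s z * deriv (fun a => u₁ a z) s) (2 * (deriv (u₁ s) y * deriv (fun a => u₂ a y) s - deriv (u₂ s) y * deriv (fun a => u₁ a y) s)) y := by
    intro y
    obtain ⟨Q1, Q2, Q3, Q4, Q5, Q6⟩ := pack T u₁ h1 ode1 s y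
    obtain ⟨R1, R2, R3, R4, R5, R6⟩ := pack T u₂ h2 ode2 s y
    have h : HasDerivAt (fun z => u₁ s z * deriv (fun a => u₂ a z) s - u₂ s z * deriv (fun a => u₁ a z) s)
        (deriv (u₁ s) y * deriv (fun a => u₂ a y) s + u₁ s y * deriv (fun a => deriv (u₂ a) y) s
          - (deriv (u₂ s) y * deriv (fun a => u₁ a y) s + u₂ s y * deriv (fun a => deriv (u₁ a) y) s)) y := (Q3.mul R5).sub (R3.mul Q5)
    have e : deriv (u₁ s) y * deriv (fun a => u₂ a y) s + u₁ s y * deriv (fun a => deriv (u₂ a) y) s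
        - (deriv (u₂ s) y * deriv (fun a => u₁ a y) s + u₂ s y * deriv (fun a => deriv (u₁ a) y) s) = 2 * (deriv (u₁ s) y * deriv (fun a => u₂ a y) s - deriv (u₂ s) y * deriv (fun a => u₁ a y) s) := by
      linarith [hz y]
    exact e ▸ h
  have G1 : ∀ y : ℝ, deriv (fun z => u₁ s z * deriv (fun a => u₂ a z) s - u₂ s z * deriv (fun a => u₁ a z) s) y = 2 * (deriv (u₁ s) y * deriv (fun a => u₂ a y) s - deriv (u₂ s) y * deriv (fun a => u₁ a y) s) := fun y => (W y).deriv
  have hΘ1 : deriv (fun z => u₁ s z * deriv (fun a => u₂ a z) s - u₂ s z * deriv (fun a => u₁ a z) s) = fun y => 2 * (deriv (u₁ s) y * deriv (fun a => u₂ a y) s - deriv (u₂ s) y * deriv (fun a => u₁ a y) s) := funext G1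
  have hiter2 : deriv^[2] (fun z => u₁ s z * deriv (fun a => u₂ a z) s - u₂ s z * deriv (fun a => u₁ a z) s) = deriv (deriv (fun z => u₁ s z * deriv (fun a => u₂ a z) s - u₂ s z * deriv (fun a => u₁ a z) s)) := rfl
  have hiter3 : deriv^[3] (fun z => u₁ s z * deriv (fun a => u₂ a z) s - u₂ s z * deriv (fun a => u₁ a z) s) = deriv (deriv^[2] (fun z => u₁ s z * deriv (fun a => u₂ a z) s - u₂ s z * deriv (fun a => u₁ a z) s)) := rfl
  have G2 : ∀ y : ℝ, deriv^[2] (fun z => u₁ s z * deriv (fun a => u₂ a z) s - u₂ s z * deriv (fun a => u₁ a z) s) y = -2 * T y * (u₁ s y * deriv (fun a => u₂ a y) s - u₂ s y * deriv (fun a => u₁ a y) s) + 2 * (deriv (u₁ s) y * deriv (fun a => deriv (u₂ a) y) s - deriv (u₂ s) y * deriv (fun a => deriv (u₁ a) y) s) := by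
    intro y
    obtain ⟨Q1, Q2, Q3, Q4, Q5, Q6⟩ := pack T u₁ h1 ode1 s y
    obtain ⟨R1, R2, R3, R4, R5, R6⟩ := pack T u₂ h2 ode2 s y
    have h : HasDerivAt (fun y => 2 * (deriv (u₁ s) y * deriv (fun a => u₂ a y) s - deriv (u₂ s) y * deriv (fun a => u₁ a y) s))
        (2 * (-(T y * u₁ s y) * deriv (fun a => u₂ a y) s + deriv (u₁ s) y * deriv (fun a => deriv (u₂ a) y) s
          - (-(T y * u₂ s y) * deriv (fun a => u₁ a y) s + deriv (u₂ s) y * deriv (fun a => deriv (u₁ a) y) s))) y :=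
      ((Q4.mul R5).sub (R4.mul Q5)).const_mul 2
    rw [hiter2, hΘ1, h.deriv]; ring
  have e2fun : deriv^[2] (fun z => u₁ s z * deriv (fun a => u₂ a z) s - u₂ s z * deriv (fun a => u₁ a z) s) = fun y => -2 * T y * (u₁ s y * deriv (fun a => u₂ a y) s - u₂ s y * deriv (fun a => u₁ a y) s) + 2 * (deriv (u₁ s) y * deriv (fun a => deriv (u₂ a) y) s - deriv (u₂ s) y * deriv (fun a => deriv (u₁ a) y) s) := funext G2
  have hτinv : ∀ y : ℝ, (!![deriv (u₁ s) y, deriv (u₂ s) y; u₁ s y, u₂ s y])⁻¹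
      = !![u₂ s y, -(deriv (u₂ s) y); -(u₁ s y), deriv (u₁ s) y] := by
    intro y
    have hdet : (!![deriv (u₁ s) y, deriv (u₂ s) y; u₁ s y, u₂ s y]).det = 1 := by
      rw [Matrix.det_fin_two_of]; linear_combination wron s y
    rw [Matrix.inv_def, Matrix.adjugate_fin_two_of, hdet]
    norm_num
  have G3 : ∀ y : ℝ, !![deriv (fun a => deriv (u₁ a) y) s, deriv (fun a => deriv (u₂ a) y) s; deriv (fun a => u₁ a y) s, deriv (fun a => u₂ a y) s] * (!![deriv (u₁ s) y, deriv (u₂ s) y; u₁ s y, u₂ s y])⁻¹ = !![-(1 / 2) * deriv (fun z => u₁ s z * deriv (fun a => u₂ a z) s - u₂ s z * deriv (fun a => u₁ a z) s) y, 1 / 2 * deriv^[2] (fun z => u₁ s z * deriv (fun a => u₂ a z) s - u₂ s z * deriv (fun a => u₁ a z) s) y + T y * (u₁ s y * deriv (fun a => u₂ a y) s - u₂ s y * deriv (fun a => u₁ a y) s); -(u₁ s y * deriv (fun a => u₂ a y) s - u₂ s y * deriv (fun a => u₁ a y) s), 1 / 2 * deriv (fun z => u₁ s z * deriv (fun a =>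 u₂ a z) s - u₂ s z * deriv (fun a => u₁ a z) s) y] := by
    intro y
    rw [hτinv y, G1 y, G2 y]
    ext i j
    fin_cases i <;> fin_cases j <;>
      simp [Matrix.mul_apply, Fin.sum_univ_two] <;>
      first
        | ring1
        | linear_combination hz y
        | linear_combination -1 * hz y
        | linear_combination 2 * hz y
        | linear_combination -2 * hz y
        | linarith [hz y]
  obtain ⟨B1, B2, B3, B4, B5, B6⟩ := pack T u₁ h1 ode1 s x
  obtain ⟨C1, C2, C3, C4, C5, C6⟩ := pack T u₂ h2 ode2 s x
  have hTx : HasDerivAt T (deriv T x) x := (hT.differentiable (by simp) x).hasDerivAt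
  have DW : HasDerivAt (fun y => 2 * (deriv (u₁ s) y * deriv (fun a => u₂ a y) s - deriv (u₂ s) y * deriv (fun a => u₁ a y) s)) (2 * (-(T x * u₁ s x) * deriv (fun a => u₂ a x) s + deriv (u₁ s) x * deriv (fun a => deriv (u₂ a) x) s - (-(T x * u₂ s x) * deriv (fun a => u₁ a x) s + deriv (u₂ s) x * deriv (fun a => deriv (u₁ a) x) s))) x :=
    ((B4.mul C5).sub (C4.mul B5)).const_mul 2
  have DW' : HasDerivAt (deriv (fun z => u₁ s z * deriv (fun a => u₂ a z) s - u₂ s z * deriv (fun a => u₁ a z) s)) (2 * (-(T x * u₁ s x) * deriv (fun a => u₂ a x) s + deriv (u₁ s) x * deriv (fun a => deriv (u₂ a) x) s - (-(T x * u₂ s x) * deriv (fun a => u₁ a x) s + deriv (u₂ s) x * deriv (fun a => deriv (u₁ a) x) s))) x := by rw [hΘ1]; exact DW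
  have H3 : HasDerivAt (fun y => -2 * T y * (u₁ s y * deriv (fun a => u₂ a y) s - u₂ s y * deriv (fun a => u₁ a y) s) + 2 * (deriv (u₁ s) y * deriv (fun a => deriv (u₂ a) y) s - deriv (u₂ s) y * deriv (fun a => deriv (u₁ a) y) s)) ((-2 * deriv T x) * (u₁ s x * deriv (fun a => u₂ a x) s - u₂ s x * deriv (fun a => u₁ a x) s) + (-2 * T x) * (2 * (deriv (u₁ s) x * deriv (fun a => u₂ a x) s - deriv (u₂ s) x * deriv (fun a => u₁ a x) s)) + 2 * (-(T x * u₁ s x) * deriv (fun a => deriv (u₂ a) x) s + deriv (u₁ s) x * (-(T x * deriv (fun a => u₂ a x) s)) - (-(T x * u₂ s x) * deriv (fun a => deriv (u₁ a) x) s + deriv (u₂ s) x * (-(T x * deriv (fun a => u₁ a x) s))))) x :=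
    (((hTx.const_mul (-2)).mul (W x)).add (((B4.mul C6).sub (C4.mul B6)).const_mul 2))
  have H3' : deriv^[3] (fun z => u₁ s z * deriv (fun a => u₂ a z) s - u₂ s z * deriv (fun a => u₁ a z) s) x = (-2 * deriv T x) * (u₁ s x * deriv (fun a => u₂ a x) s - u₂ s x * deriv (fun a => u₁ a x) s) + (-2 * T x) * (2 * (deriv (u₁ s) x * deriv (fun a => u₂ a x) s - deriv (u₂ s) x * deriv (fun a => u₁ a x) s)) + 2 * (-(T x * u₁ s x) * deriv (fun a => deriv (u₂ a) x) s + deriv (u₁ s) x * (-(T x * deriv (fun a => u₂ a x) s)) - (-(T x * u₂ s x) * deriv (fun a => deriv (u₁ a) x) s + deriv (u₂ s) x * (-(T x * deriv (fun a => u₁ a x) s)))) := by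
    rw [hiter3, e2fun]; exact H3.deriv
  have hd2x : HasDerivAt (deriv^[2] (fun z => u₁ s z * deriv (fun a => u₂ a z) s - u₂ s z * deriv (fun a => u₁ a z) s)) ((-2 * deriv T x) * (u₁ s x * deriv (fun a => u₂ a x) s - u₂ s x * deriv (fun a => u₁ a x) s) + (-2 * T x) * (2 * (deriv (u₁ s) x * deriv (fun a => u₂ a x) s - deriv (u₂ s) x * deriv (fun a => u₁ a x) s)) + 2 * (-(T x * u₁ s x) * deriv (fun a => deriv (u₂ a) x) s + deriv (u₁ s) x * (-(T x * deriv (fun a => u₂ a x) s)) - (-(T x * u₂ s x) * deriv (fun a => deriv (u₁ a) x) s + deriv (u₂ s) x * (-(T x * deriv (fun a => u₁ a x) s))))) x := by rw [e2fun]; exact H3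
  have E00 : deriv (fun y => (!![deriv (fun a => deriv (u₁ a) y) s, deriv (fun a => deriv (u₂ a) y) s; deriv (fun a => u₁ a y) s, deriv (fun a => u₂ a y) s] * (!![deriv (u₁ s) y, deriv (u₂ s) y; u₁ s y, u₂ s y])⁻¹) 0 0) x = -(1 / 2) * (2 * (-(T x * u₁ s x) * deriv (fun a => u₂ a x) s + deriv (u₁ s) x * deriv (fun a => deriv (u₂ a) x) s - (-(T x * u₂ s x) * deriv (fun a => u₁ a x) s + deriv (u₂ s) x * deriv (fun a => deriv (u₁ a) x) s))) := by
    have e : (fun y => (!![deriv (fun a => deriv (u₁ a) y) s, deriv (fun a => deriv (u₂ a) y) s; deriv (fun a => u₁ a y) s, deriv (fun a => u₂ a y) s] * (!![deriv (u₁ s) y, deriv (u₂ s) y; u₁ s y, u₂ s y])⁻¹) 0 0) = fun y => -(1 / 2) * deriv (fun z => u₁ s z * deriv (fun a => u₂ a z) s - u₂ s z * deriv (fun a => u₁ a z) s) y :=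
      funext fun y => by rw [G3 y]; simp
    rw [e]; exact (DW'.const_mul (-(1 / 2))).deriv
  have E01 : deriv (fun y => (!![deriv (fun a => deriv (u₁ a) y) s, deriv (fun a => deriv (u₂ a) y) s; deriv (fun a => u₁ a y) s, deriv (fun a => u₂ a y) s] * (!![deriv (u₁ s) y, deriv (u₂ s) y; u₁ s y, u₂ s y])⁻¹) 0 1) x = 1 / 2 * ((-2 * deriv T x) * (u₁ s x * deriv (fun a => u₂ a x) s - u₂ s x * deriv (fun a => u₁ a x) s) + (-2 * T x) * (2 * (deriv (u₁ s) x * deriv (fun a => u₂ a x) s - deriv (u₂ s) x * deriv (fun a => u₁ a x) s)) + 2 * (-(T x * u₁ s x) * deriv (fun a => deriv (u₂ a) x) s + deriv (u₁ s) x * (-(T x * deriv (fun a => u₂ a x) s)) - (-(T x * u₂ s x) * deriv (fun a => deriv (u₁ a) x) s + deriv (u₂ s) x * (-(T x * deriv (fun a => u₁ a x) s))))) + (deriv T x * (u₁ s x * deriv (fun a => u₂ a x) s - u₂ s x * deriv (fun a => u₁ a x) s) + T x * (2 * (deriv (u₁ s) x * deriv (fun a => u₂ a x) s - deriv (u₂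 s) x * deriv (fun a => u₁ a x) s))) := by
    have e : (fun y => (!![deriv (fun a => deriv (u₁ a) y) s, deriv (fun a => deriv (u₂ a) y) s; deriv (fun a => u₁ a y) s, deriv (fun a => u₂ a y) s] * (!![deriv (u₁ s) y, deriv (u₂ s) y; u₁ s y, u₂ s y])⁻¹) 0 1)
        = fun y => 1 / 2 * deriv^[2] (fun z => u₁ s z * deriv (fun a => u₂ a z) s - u₂ s z * deriv (fun a => u₁ a z) s) y + T y * (u₁ s y * deriv (fun a => u₂ a y) s - u₂ s y * deriv (fun a => u₁ a y) s) :=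
      funext fun y => by rw [G3 y]; simp
    rw [e]; exact ((hd2x.const_mul (1 / 2)).add (hTx.mul (W x))).deriv
  have E10 : deriv (fun y => (!![deriv (fun a => deriv (u₁ a) y) s, deriv (fun a => deriv (u₂ a) y) s; deriv (fun a => u₁ a y) s, deriv (fun a => u₂ a y) s] * (!![deriv (u₁ s) y, deriv (u₂ s) y; u₁ s y, u₂ s y])⁻¹) 1 0) x = -(2 * (deriv (u₁ s) x * deriv (fun a => u₂ a x) s - deriv (u₂ s) x * deriv (fun a => u₁ a x) s)) := by
    have e : (fun y => (!![deriv (fun a => deriv (u₁ a) y) s, deriv (fun a => deriv (u₂ a) y) s; deriv (fun a => u₁ a y) s, deriv (fun a => u₂ a y) s] * (!![deriv (u₁ s) y, deriv (u₂ s) y; u₁ s y, u₂ s y])⁻¹) 1 0) = fun y => -(u₁ s y * deriv (fun a => u₂ a y) s - u₂ s y * deriv (fun a => u₁ a y) s) :=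
      funext fun y => by rw [G3 y]; simp
    rw [e]; exact (W x).neg.deriv
  have E11 : deriv (fun y => (!![deriv (fun a => deriv (u₁ a) y) s, deriv (fun a => deriv (u₂ a) y) s; deriv (fun a => u₁ a y) s, deriv (fun a => u₂ a y) s] * (!![deriv (u₁ s) y, deriv (u₂ s) y; u₁ s y, u₂ s y])⁻¹) 1 1) x = 1 / 2 * (2 * (-(T x * u₁ s x) * deriv (fun a => u₂ a x) s + deriv (u₁ s) x * deriv (fun a => deriv (u₂ a) x) s - (-(T x * u₂ s x) * deriv (fun a => u₁ a x) s + deriv (u₂ s) x * deriv (fun a => deriv (u₁ a) x) s))) := by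
    have e : (fun y => (!![deriv (fun a => deriv (u₁ a) y) s, deriv (fun a => deriv (u₂ a) y) s; deriv (fun a => u₁ a y) s, deriv (fun a => u₂ a y) s] * (!![deriv (u₁ s) y, deriv (u₂ s) y; u₁ s y, u₂ s y])⁻¹) 1 1) = fun y => 1 / 2 * deriv (fun z => u₁ s z * deriv (fun a => u₂ a z) s - u₂ s z * deriv (fun a => u₁ a z) s) y :=
      funext fun y => by rw [G3 y]; simp
    rw [e]; exact (DW'.const_mul (1 / 2)).deriv
  have hof : (Matrix.of fun i j => deriv (fun y => (!![deriv (fun a => deriv (u₁ a) y) s, deriv (fun a => deriv (u₂ a) y) s; deriv (fun a => u₁ a y) s, deriv (fun a => u₂ a y) s] * (!![deriv (u₁ s) y, deriv (u₂ s) y; u₁ s y, u₂ s y])⁻¹) i j) x)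
      = !![-(1 / 2) * (2 * (-(T x * u₁ s x) * deriv (fun a => u₂ a x) s + deriv (u₁ s) x * deriv (fun a => deriv (u₂ a) x) s - (-(T x * u₂ s x) * deriv (fun a => u₁ a x) s + deriv (u₂ s) x * deriv (fun a => deriv (u₁ a) x) s))), 1 / 2 * ((-2 * deriv T x) * (u₁ s x * deriv (fun a => u₂ a x) s - u₂ s x * deriv (fun a => u₁ a x) s) + (-2 * T x) * (2 * (deriv (u₁ s) x * deriv (fun a => u₂ a x) s - deriv (u₂ s) x * deriv (fun a => u₁ a x) s)) + 2 * (-(T x * u₁ s x) * deriv (fun a => deriv (u₂ a) x) s + deriv (u₁ s) x * (-(T x * deriv (fun a => u₂ a x) s)) - (-(T x * u₂ s x) * deriv (fun a => deriv (u₁ a) x) s + deriv (u₂ s) x * (-(T x * deriv (fun a => u₁ a x) s))))) + (deriv T x * (u₁ s x * deriv (fun a => u₂ a x) s - u₂ s x * deriv (fun a => u₁ a x) s) + T x * (2 * (deriv (u₁ s) x * deriv (fun a => u₂ a x) s - deriv (u₂ s) x * deriv (fun a => u₁ a x) s))); -(2 * (deriv (u₁ s) x * deriv (fun a => u₂ a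 x) s - deriv (u₂ s) x * deriv (fun a => u₁ a x) s)), 1 / 2 * (2 * (-(T x * u₁ s x) * deriv (fun a => u₂ a x) s + deriv (u₁ s) x * deriv (fun a => deriv (u₂ a) x) s - (-(T x * u₂ s x) * deriv (fun a => u₁ a x) s + deriv (u₂ s) x * deriv (fun a => deriv (u₁ a) x) s)))] := by
    ext i j
    fin_cases i <;> fin_cases j <;>
      simp only [Matrix.of_apply, Fin.zero_eta, Fin.mk_one, Fin.isValue, Matrix.cons_val',
        Matrix.cons_val_zero, Matrix.cons_val_one, Matrix.head_cons, Matrix.empty_val',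
        Matrix.cons_val_fin_one, Matrix.head_fin_const]
    · exact E00
    · exact E01
    · exact E10
    · exact E11
  have H4 : (Matrix.of fun i j => deriv (fun y => (!![deriv (fun a => deriv (u₁ a) y) s, deriv (fun a => deriv (u₂ a) y) s; deriv (fun a => u₁ a y) s, deriv (fun a => u₂ a y) s] * (!![deriv (u₁ s) y, deriv (u₂ s) y; u₁ s y, u₂ s y])⁻¹) i j) x)
      + (!![0, T x; -1, 0] * (!![deriv (fun a => deriv (u₁ a) x) s, deriv (fun a => deriv (u₂ a) x) s; deriv (fun a => u₁ a x) s, deriv (fun a => u₂ a x) s] * (!![deriv (u₁ s) x, deriv (u₂ s) x; u₁ s x, u₂ s x])⁻¹) - (!![deriv (fun a => deriv (u₁ a) x) s, deriv (fun a => deriv (u₂ a) x) s; deriv (fun a => u₁ a x) s, deriv (fun a => u₂ a x) s] * (!![deriv (u₁ s) x, deriv (u₂ s) x; u₁ s x, u₂ s x])⁻¹) * !![0, T x; -1, 0])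
      = !![0, -(-(1 / 2 * deriv^[3] (fun z => u₁ s z * deriv (fun a => u₂ a z) s - u₂ s z * deriv (fun a => u₁ a z) s) x + deriv T x * (u₁ s x * deriv (fun a => u₂ a x) s - u₂ s x * deriv (fun a => u₁ a x) s)
            + 2 * T x * deriv (fun z => u₁ s z * deriv (fun a => u₂ a z) s - u₂ s z * deriv (fun a => u₁ a z) s) x)); 0, 0] := by
    rw [hof, G3 x]
    ext i j
    fin_cases i <;> fin_cases j <;>
      simp only [Matrix.mul_apply, Fin.sum_univ_two, Matrix.add_apply, Matrix.sub_apply,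
        Matrix.of_apply, Matrix.cons_val', Matrix.cons_val_zero, Matrix.cons_val_one,
        Matrix.head_cons, Matrix.empty_val', Matrix.cons_val_fin_one, Matrix.head_fin_const,
        Fin.zero_eta, Fin.mk_one, Fin.isValue, G1 x, G2 x, H3'] <;>
      first
        | ring1
        | linarith [hz x]
  refine ⟨G1 x, G2 x, G3 x, H4, ?_⟩
  rw [H4, G3 x]
  rw [Matrix.mul_fin_two, Matrix.trace_fin_two_of]
  rw [G1 x, G2 x, H3']
  ring
end
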